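/- arXiv:1106.0720 — 3 statements merged into one kernel-verified Lean document; each statement's English description precedes it below -/
import Mathlib

section
/- Let {log f_n} be an almost-additive Bowen sequence on a topologically mixing countable Markov shift Σ. Then for each symbol a, the limit lim_{n→∞} (1/n) log Z_n(F,a) exists in (−∞, +∞], and if ‖L_{f_1}1‖_∞ < ∞ the limit is finite. -/
open scoped ENNReal
open Filter

noncomputable section

/-- The one-sided shift map on sequences. -/
def shf {S : Type*} : (ℕ → S) → (ℕ → S) := fun x i => x (i + 1)

/-- The countable Markov shift determined by the transition relation `T`. -/
def shiftSpace {S : Type*} (T : S → S → Prop) : Set (ℕ → S) :=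
  {x | ∀ i, T (x i) (x (i + 1))}


/-- The partition function `Z_n(F,a)`: sum of `f_n` over periodic points of period `n`
starting with symbol `a`. -/
def ZFun {S : Type*} (T : S → S → Prop) (f : ℕ → (ℕ → S) → ℝ) (n : ℕ) (a : S) : ℝ≥0∞ :=
  ∑' x : {x : ℕ → S // x ∈ shiftSpace T ∧ shf^[n] x = x ∧ x 0 = a}, ENNReal.ofReal (f n x)

/-- The supremum norm of the transfer operator of `f₁` applied to the constant function 1. -/
def transferNorm {S : Type*} (T : S → S → Prop) (f1 : (ℕ → S) → ℝ) : ℝ≥0∞ :=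
  ⨆ x : shiftSpace T,
    ∑' z : {z : ℕ → S // z ∈ shiftSpace T ∧ shf z = (x : ℕ → S)}, ENNReal.ofReal (f1 z)


section helpers

variable {S : Type*} {T : S → S → Prop}

lemma shf_iterate_apply (x : ℕ → S) (n i : ℕ) : shf^[n] x i = x (i + n) := by
  induction n generalizing x i with
  | zero => rfl
  | succ n ih =>
    rw [Function.iterate_succ_apply, ih]
    rfl

lemma shf_mem {x : ℕ → S} (hx : x ∈ shiftSpace T) : shf x ∈ shiftSpace T :=
  fun i => hx (i + 1)

lemma shf_iterate_mem {x : ℕ → S} (hx : x ∈ shiftSpace T) (n : ℕ) :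
    shf^[n] x ∈ shiftSpace T := by
  induction n with
  | zero => exact hx
  | succ n ih => rw [Function.iterate_succ_apply']; exact shf_mem ih

lemma periodic_apply {x : ℕ → S} {n : ℕ} (hx : shf^[n] x = x) (i : ℕ) :
    x i = x (i % n) := by
  rcases Nat.eq_zero_or_pos n with h | h
  · subst h; simp
  have hstep : ∀ j, x (j + n) = x j := by
    intro j
    conv_rhs => rw [← hx]
    rw [shf_iterate_apply]
  have hmul : ∀ q j, x (j + q * n) = x j := by
    intro q
    induction q with
    | zero => simp
    | succ q ih =>
      intro j
      have : j + (q + 1) * n = (j + q * n) + n := by ring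
      rw [this, hstep, ih]
  conv_lhs => rw [← Nat.div_add_mod i n, Nat.mul_comm, Nat.add_comm]
  exact hmul (i / n) (i % n)

lemma per_spec {x : ℕ → S} {n : ℕ} (hx : x ∈ shiftSpace T) (hxn : x n = x 0)
    (hn : 0 < n) :
    (fun i => x (i % n)) ∈ shiftSpace T ∧ shf^[n] (fun i => x (i % n)) = (fun i => x (i % n))
      ∧ (fun i => x (i % n)) 0 = x 0 := by
  refine ⟨?_, ?_, by simp [Nat.mod_eq_of_lt hn]⟩
  · intro i
    simp only
    have hlt : i % n < n := Nat.mod_lt _ hn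
    have hmod : (i + 1) % n = (i % n + 1) % n := by
      conv_lhs => rw [← Nat.mod_add_mod]
    rcases Nat.lt_or_ge (i % n + 1) n with h | h
    · rw [hmod, Nat.mod_eq_of_lt h]
      exact hx (i % n)
    · have heq : i % n + 1 = n := by omega
      rw [hmod, heq, Nat.mod_self]
      have := hx (i % n)
      rw [heq, hxn] at this
      exact this
  · funext i
    rw [shf_iterate_apply]
    show x ((i + n) % n) = x (i % n)
    rw [Nat.add_mod_right]

end helpers

section Zlemmas

variable {S : Type*} (T : S → S → Prop) (f : ℕ → (ℕ → S) → ℝ) {M C : ℝ}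

/-- the periodic point built from an admissible loop -/
lemma Z_pos (hpos : ∀ n, 0 < n → ∀ x ∈ shiftSpace T, 0 < f n x) (a : S)
    (hmix : ∃ N : ℕ, ∀ n > N, ∃ x ∈ shiftSpace T, x 0 = a ∧ x n = a) :
    ∃ N : ℕ, ∀ n, N < n → 0 < ZFun T f n a := by
  obtain ⟨N, hN⟩ := hmix
  refine ⟨N, fun n hn => ?_⟩
  obtain ⟨x, hx, hx0, hxn⟩ := hN n hn
  have hn0 : 0 < n := by omega
  obtain ⟨h1, h2, h3⟩ := per_spec hx (hxn.trans hx0.symm) hn0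
  set z : ℕ → S := fun i => x (i % n) with hz
  have hzmem : z ∈ {x : ℕ → S | x ∈ shiftSpace T ∧ shf^[n] x = x ∧ x 0 = a} :=
    ⟨h1, h2, h3.trans hx0⟩
  calc (0 : ℝ≥0∞) < ENNReal.ofReal (f n z) :=
        ENNReal.ofReal_pos.mpr (hpos n hn0 z h1)
    _ ≤ ZFun T f n a := ENNReal.le_tsum (⟨z, hzmem⟩ : {x : ℕ → S // x ∈ shiftSpace T ∧ shf^[n] x = x ∧ x 0 = a})


lemma Z_superadd {M C : ℝ} (hM : 0 < M)
    (hpos : ∀ n, 0 < n → ∀ x ∈ shiftSpace T, 0 < f n x)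
    (hBowen : ∀ n, 0 < n → ∀ x ∈ shiftSpace T, ∀ y ∈ shiftSpace T,
      (∀ i < n, x i = y i) → f n x ≤ M * f n y)
    (hAA : ∀ n m, 0 < n → 0 < m → ∀ x ∈ shiftSpace T,
      f n x * f m (shf^[n] x) * Real.exp (-C) ≤ f (n + m) x ∧
        f (n + m) x ≤ Real.exp C * (f n x * f m (shf^[n] x)))
    (a : S) (n m : ℕ) (hn : 0 < n) (hm : 0 < m) :
    ENNReal.ofReal (Real.exp (-C) / (M * M)) * (ZFun T f n a * ZFun T f m a)
      ≤ ZFun T f (n + m) a := by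
  classical
  set c : ℝ := Real.exp (-C) / (M * M) with hc
  have hc0 : 0 < c := by positivity
  set F : {x : ℕ → S // x ∈ shiftSpace T ∧ shf^[n] x = x ∧ x 0 = a}
      × {x : ℕ → S // x ∈ shiftSpace T ∧ shf^[m] x = x ∧ x 0 = a}
      → (ℕ → S) := fun p => fun i =>
        if i % (n + m) < n then p.1.1 (i % (n + m)) else p.2.1 (i % (n + m) - n) with hF
  have hFspec : ∀ p, (F p ∈ shiftSpace T ∧ shf^[n+m] (F p) = F p ∧ F p 0 = a)
      ∧ (∀ i < n, p.1.1 i = F p i) ∧ (∀ i < m, p.2.1 i = shf^[n] (F p) i) := by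
    rintro ⟨⟨x, hx1, hx2, hx3⟩, ⟨y, hy1, hy2, hy3⟩⟩
    set u : ℕ → S := fun i => if i < n then x i else y (i - n) with hu
    have hxn : x n = x 0 := by conv_lhs => rw [periodic_apply hx2 n, Nat.mod_self]
    have hym : y m = y 0 := by conv_lhs => rw [periodic_apply hy2 m, Nat.mod_self]
    have hu1 : u ∈ shiftSpace T := by
      intro i
      simp only [hu]
      rcases lt_trichotomy (i+1) n with h|h|h
      · rw [if_pos (by omega), if_pos h]; exact hx1 i
      · rw [if_pos (by omega), if_neg (by omega)]
        have h0 : i + 1 - n = 0 := by omega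
        rw [h0, hy3, ← hx3, ← hxn, ← h]
        exact hx1 i
      · rw [if_neg (by omega), if_neg (by omega)]
        have h0 : i + 1 - n = (i - n) + 1 := by omega
        rw [h0]; exact hy1 (i - n)
    have hu0 : u (n + m) = u 0 := by
      simp only [hu, if_neg (show ¬ n + m < n by omega), if_pos hn]
      rw [Nat.add_sub_cancel_left, hym, hy3, ← hx3]
    obtain ⟨hp1, hp2, hp3⟩ := per_spec hu1 hu0 (by omega)
    have hFeq : F (⟨⟨x, hx1, hx2, hx3⟩, ⟨y, hy1, hy2, hy3⟩⟩ :
        {x : ℕ → S // x ∈ shiftSpace T ∧ shf^[n] x = x ∧ x 0 = a}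
        × {x : ℕ → S // x ∈ shiftSpace T ∧ shf^[m] x = x ∧ x 0 = a})
        = fun i => u (i % (n + m)) := rfl
    rw [hFeq]
    refine ⟨⟨hp1, hp2, ?_⟩, ?_, ?_⟩
    · rw [hp3]
      simp only [hu, if_pos hn]
      exact hx3
    · intro i hi
      simp only
      rw [Nat.mod_eq_of_lt (by omega)]
      simp only [hu, if_pos hi]
    · intro i hi
      rw [shf_iterate_apply]
      simp only
      rw [Nat.mod_eq_of_lt (by omega)]
      simp only [hu, if_neg (show ¬ i + n < n by omega), Nat.add_sub_cancel]
  set G : {x : ℕ → S // x ∈ shiftSpace T ∧ shf^[n] x = x ∧ x 0 = a}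
      × {x : ℕ → S // x ∈ shiftSpace T ∧ shf^[m] x = x ∧ x 0 = a}
      → {x : ℕ → S // x ∈ shiftSpace T ∧ shf^[n+m] x = x ∧ x 0 = a} :=
    fun p => ⟨F p, (hFspec p).1⟩ with hG
  have hterm : ∀ p, ENNReal.ofReal c *
      (ENNReal.ofReal (f n p.1.1) * ENNReal.ofReal (f m p.2.1))
      ≤ ENNReal.ofReal (f (n + m) (G p).1) := by
    intro p
    obtain ⟨⟨hz1, hz2, hz3⟩, hax, hay⟩ := hFspec p
    have hfx : f n p.1.1 ≤ M * f n (F p) := hBowen n hn _ p.1.2.1 _ hz1 hax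
    have hfy : f m p.2.1 ≤ M * f m (shf^[n] (F p)) :=
      hBowen m hm _ p.2.2.1 _ (shf_iterate_mem hz1 n) hay
    have hAA' := (hAA n m hn hm _ hz1).1
    have h1 : 0 < f n (F p) := hpos n hn _ hz1
    have h2 : 0 < f m (shf^[n] (F p)) := hpos m hm _ (shf_iterate_mem hz1 n)
    have h3 : 0 < f n p.1.1 := hpos n hn _ p.1.2.1
    have h4 : 0 < f m p.2.1 := hpos m hm _ p.2.2.1
    have hreal : c * (f n p.1.1 * f m p.2.1) ≤ f (n + m) (F p) := by
      have hmul : f n p.1.1 * f m p.2.1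
          ≤ (M * M) * (f n (F p) * f m (shf^[n] (F p))) := by nlinarith
      calc c * (f n p.1.1 * f m p.2.1)
          ≤ c * ((M * M) * (f n (F p) * f m (shf^[n] (F p)))) :=
            mul_le_mul_of_nonneg_left hmul hc0.le
        _ = f n (F p) * f m (shf^[n] (F p)) * Real.exp (-C) := by
            rw [hc]; field_simp
        _ ≤ f (n + m) (F p) := hAA'
    calc ENNReal.ofReal c * (ENNReal.ofReal (f n p.1.1) * ENNReal.ofReal (f m p.2.1))
        = ENNReal.ofReal (c * (f n p.1.1 * f m p.2.1)) := by
          rw [← ENNReal.ofReal_mul h3.le, ← ENNReal.ofReal_mul hc0.le]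
      _ ≤ ENNReal.ofReal (f (n + m) (G p).1) := ENNReal.ofReal_le_ofReal hreal
  have hGinj : Function.Injective G := by
    intro p q hpq
    have hz : F p = F q := congrArg Subtype.val hpq
    have hx : p.1 = q.1 := by
      apply Subtype.ext; funext i
      calc p.1.1 i = p.1.1 (i % n) := periodic_apply p.1.2.2.1 i
        _ = F p (i % n) := (hFspec p).2.1 _ (Nat.mod_lt _ hn)
        _ = F q (i % n) := by rw [hz]
        _ = q.1.1 (i % n) := ((hFspec q).2.1 _ (Nat.mod_lt _ hn)).symm
        _ = q.1.1 i := (periodic_apply q.1.2.2.1 i).symm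
    have hy : p.2 = q.2 := by
      apply Subtype.ext; funext i
      calc p.2.1 i = p.2.1 (i % m) := periodic_apply p.2.2.2.1 i
        _ = shf^[n] (F p) (i % m) := (hFspec p).2.2 _ (Nat.mod_lt _ hm)
        _ = shf^[n] (F q) (i % m) := by rw [hz]
        _ = q.2.1 (i % m) := ((hFspec q).2.2 _ (Nat.mod_lt _ hm)).symm
        _ = q.2.1 i := (periodic_apply q.2.2.2.1 i).symm
    exact Prod.ext hx hy
  have hprod : ENNReal.ofReal c * (ZFun T f n a * ZFun T f m a)
      = ∑' p : {x : ℕ → S // x ∈ shiftSpace T ∧ shf^[n] x = x ∧ x 0 = a}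
          × {x : ℕ → S // x ∈ shiftSpace T ∧ shf^[m] x = x ∧ x 0 = a},
        ENNReal.ofReal c * (ENNReal.ofReal (f n p.1.1) * ENNReal.ofReal (f m p.2.1)) := by
    symm
    calc ∑' p : {x : ℕ → S // x ∈ shiftSpace T ∧ shf^[n] x = x ∧ x 0 = a}
          × {x : ℕ → S // x ∈ shiftSpace T ∧ shf^[m] x = x ∧ x 0 = a},
        ENNReal.ofReal c * (ENNReal.ofReal (f n p.1.1) * ENNReal.ofReal (f m p.2.1))
        = ∑' (x : {x : ℕ → S // x ∈ shiftSpace T ∧ shf^[n] x = x ∧ x 0 = a})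
            (y : {x : ℕ → S // x ∈ shiftSpace T ∧ shf^[m] x = x ∧ x 0 = a}),
            ENNReal.ofReal c * (ENNReal.ofReal (f n x.1) * ENNReal.ofReal (f m y.1)) :=
          ENNReal.tsum_prod (f := fun (x : {x : ℕ → S // x ∈ shiftSpace T ∧ shf^[n] x = x ∧ x 0 = a})
            (y : {x : ℕ → S // x ∈ shiftSpace T ∧ shf^[m] x = x ∧ x 0 = a}) =>
            ENNReal.ofReal c * (ENNReal.ofReal (f n x.1) * ENNReal.ofReal (f m y.1)))
      _ = ∑' (x : {x : ℕ → S // x ∈ shiftSpace T ∧ shf^[n] x = x ∧ x 0 = a}),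
            ENNReal.ofReal c * (ENNReal.ofReal (f n x.1) *
              ∑' (y : {x : ℕ → S // x ∈ shiftSpace T ∧ shf^[m] x = x ∧ x 0 = a}),
                ENNReal.ofReal (f m y.1)) :=
          tsum_congr fun x => by rw [ENNReal.tsum_mul_left, ENNReal.tsum_mul_left]
      _ = ENNReal.ofReal c * (ZFun T f n a * ZFun T f m a) := by
          simp_rw [mul_comm (ENNReal.ofReal c), mul_comm (ENNReal.ofReal (f n _))]
          rw [ENNReal.tsum_mul_right, ENNReal.tsum_mul_left, ZFun, ZFun]
          ring
  rw [hprod]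
  calc (∑' p, ENNReal.ofReal c *
        (ENNReal.ofReal (f n p.1.1) * ENNReal.ofReal (f m p.2.1)))
      ≤ ∑' p, ENNReal.ofReal (f (n + m) (G p).1) := ENNReal.tsum_le_tsum hterm
    _ ≤ ∑' z : {x : ℕ → S // x ∈ shiftSpace T ∧ shf^[n+m] x = x ∧ x 0 = a},
          ENNReal.ofReal (f (n + m) z.1) :=
        ENNReal.tsum_comp_le_tsum_of_injective hGinj _
    _ = ZFun T f (n + m) a := rfl

lemma pre_sum_le {C : ℝ} (hC : 0 ≤ C)
    (hpos : ∀ n, 0 < n → ∀ x ∈ shiftSpace T, 0 < f n x)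
    (hAA : ∀ n m, 0 < n → 0 < m → ∀ x ∈ shiftSpace T,
      f n x * f m (shf^[n] x) * Real.exp (-C) ≤ f (n + m) x ∧
        f (n + m) x ≤ Real.exp C * (f n x * f m (shf^[n] x))) :
    ∀ n, 0 < n → ∀ w, w ∈ shiftSpace T →
      ∑' z : {z : ℕ → S // z ∈ shiftSpace T ∧ shf^[n] z = w}, ENNReal.ofReal (f n z)
        ≤ ENNReal.ofReal (Real.exp (n * C)) * (transferNorm T (f 1)) ^ n := by
  intro n
  induction n with
  | zero => omega
  | succ n ih =>
    intro _ w hw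
    have hbase : ∀ w' : ℕ → S, w' ∈ shiftSpace T →
        ∑' z : {z : ℕ → S // z ∈ shiftSpace T ∧ shf z = w'}, ENNReal.ofReal (f 1 z)
          ≤ transferNorm T (f 1) :=
      fun w' hw' => le_iSup (fun x : shiftSpace T =>
        ∑' z : {z : ℕ → S // z ∈ shiftSpace T ∧ shf z = (x : ℕ → S)},
          ENNReal.ofReal (f 1 z)) ⟨w', hw'⟩
    have hexp1 : (1 : ℝ≥0∞) ≤ ENNReal.ofReal (Real.exp C) := by
      rw [show (1 : ℝ≥0∞) = ENNReal.ofReal 1 by simp]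
      exact ENNReal.ofReal_le_ofReal (Real.one_le_exp hC)
    rcases Nat.eq_zero_or_pos n with h0 | h0
    · subst h0
      have h1 : ∑' z : {z : ℕ → S // z ∈ shiftSpace T ∧ shf^[1] z = w},
          ENNReal.ofReal (f 1 z) ≤ transferNorm T (f 1) := hbase w hw
      calc ∑' z : {z : ℕ → S // z ∈ shiftSpace T ∧ shf^[1] z = w},
            ENNReal.ofReal (f 1 z) ≤ transferNorm T (f 1) := h1
        _ ≤ ENNReal.ofReal (Real.exp ((1:ℕ) * C)) * transferNorm T (f 1) ^ (1:ℕ) := by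
            rw [pow_one]
            refine le_mul_of_one_le_left zero_le ?_
            rw [show ((1:ℕ):ℝ) * C = C by push_cast; ring]
            exact hexp1
    · -- inductive step
      set K := transferNorm T (f 1) with hK
      let e : {z : ℕ → S // z ∈ shiftSpace T ∧ shf^[n+1] z = w} ≃
          Σ y : {y : ℕ → S // y ∈ shiftSpace T ∧ shf^[n] y = w},
            {z : ℕ → S // z ∈ shiftSpace T ∧ shf z = (y : ℕ → S)} :=
        { toFun := fun z => ⟨⟨shf z.1, shf_mem z.2.1, by
              rw [← Function.iterate_succ_apply]; exact z.2.2⟩, ⟨z.1, z.2.1, rfl⟩⟩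
          invFun := fun p => ⟨p.2.1, p.2.2.1, by
              rw [Function.iterate_succ_apply, p.2.2.2]; exact p.1.2.2⟩
          left_inv := fun z => rfl
          right_inv := fun p => by
            rcases p with ⟨⟨y, hy1, hy2⟩, ⟨z, hz1, hz2⟩⟩
            simp only at hz2
            subst hz2
            rfl }
      have hterm : ∀ z : {z : ℕ → S // z ∈ shiftSpace T ∧ shf^[n+1] z = w},
          ENNReal.ofReal (f (n+1) z.1) ≤ ENNReal.ofReal (Real.exp C) *
            (ENNReal.ofReal (f 1 z.1) * ENNReal.ofReal (f n (shf z.1))) := by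
        intro z
        have h1 := (hAA 1 n one_pos h0 z.1 z.2.1).2
        rw [Nat.add_comm 1 n] at h1
        have h2 : 0 ≤ f 1 z.1 := (hpos 1 one_pos z.1 z.2.1).le
        calc ENNReal.ofReal (f (n+1) z.1)
            ≤ ENNReal.ofReal (Real.exp C * (f 1 z.1 * f n (shf^[1] z.1))) :=
              ENNReal.ofReal_le_ofReal h1
          _ = ENNReal.ofReal (Real.exp C) *
              (ENNReal.ofReal (f 1 z.1) * ENNReal.ofReal (f n (shf z.1))) := by
              rw [ENNReal.ofReal_mul (Real.exp_pos C).le, ENNReal.ofReal_mul h2]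
              rfl
      calc ∑' z : {z : ℕ → S // z ∈ shiftSpace T ∧ shf^[n+1] z = w},
            ENNReal.ofReal (f (n+1) z.1)
          ≤ ∑' z : {z : ℕ → S // z ∈ shiftSpace T ∧ shf^[n+1] z = w},
            ENNReal.ofReal (Real.exp C) *
              (ENNReal.ofReal (f 1 z.1) * ENNReal.ofReal (f n (shf z.1))) :=
            ENNReal.tsum_le_tsum hterm
        _ = ENNReal.ofReal (Real.exp C) *
            ∑' z : {z : ℕ → S // z ∈ shiftSpace T ∧ shf^[n+1] z = w},
              ENNReal.ofReal (f 1 z.1) * ENNReal.ofReal (f n (shf z.1)) :=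
            ENNReal.tsum_mul_left
        _ = ENNReal.ofReal (Real.exp C) *
            ∑' p : Σ y : {y : ℕ → S // y ∈ shiftSpace T ∧ shf^[n] y = w},
              {z : ℕ → S // z ∈ shiftSpace T ∧ shf z = (y : ℕ → S)},
              ENNReal.ofReal (f 1 p.2.1) * ENNReal.ofReal (f n p.1.1) := by
            congr 1
            exact Equiv.tsum_eq e (fun p => ENNReal.ofReal (f 1 p.2.1) * ENNReal.ofReal (f n p.1.1))
        _ = ENNReal.ofReal (Real.exp C) *
            ∑' y : {y : ℕ → S // y ∈ shiftSpace T ∧ shf^[n] y = w},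
              ∑' z : {z : ℕ → S // z ∈ shiftSpace T ∧ shf z = (y : ℕ → S)},
                ENNReal.ofReal (f 1 z.1) * ENNReal.ofReal (f n y.1) := by
            rw [ENNReal.tsum_sigma']
        _ ≤ ENNReal.ofReal (Real.exp C) *
            ∑' y : {y : ℕ → S // y ∈ shiftSpace T ∧ shf^[n] y = w},
              K * ENNReal.ofReal (f n y.1) := by
            gcongr with y
            rw [ENNReal.tsum_mul_right]
            exact mul_le_mul_left (hbase y.1 y.2.1) _
        _ = ENNReal.ofReal (Real.exp C) * (K *
            ∑' y : {y : ℕ → S // y ∈ shiftSpace T ∧ shf^[n] y = w},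
              ENNReal.ofReal (f n y.1)) := by rw [ENNReal.tsum_mul_left]
        _ ≤ ENNReal.ofReal (Real.exp C) * (K * (ENNReal.ofReal (Real.exp (n * C)) * K ^ n)) := by
            gcongr
            exact ih h0 w hw
        _ = ENNReal.ofReal (Real.exp (((n:ℕ)+1 : ℕ) * C)) * K ^ (n+1) := by
            rw [show Real.exp ((((n:ℕ)+1:ℕ) : ℝ) * C) = Real.exp C * Real.exp (n * C) by
              rw [← Real.exp_add]; congr 1; push_cast; ring]
            rw [ENNReal.ofReal_mul (Real.exp_pos C).le, pow_succ]
            ring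

lemma Z_le {M C : ℝ} (hM : 0 < M) (hC : 0 ≤ C)
    (hpos : ∀ n, 0 < n → ∀ x ∈ shiftSpace T, 0 < f n x)
    (hBowen : ∀ n, 0 < n → ∀ x ∈ shiftSpace T, ∀ y ∈ shiftSpace T,
      (∀ i < n, x i = y i) → f n x ≤ M * f n y)
    (hAA : ∀ n m, 0 < n → 0 < m → ∀ x ∈ shiftSpace T,
      f n x * f m (shf^[n] x) * Real.exp (-C) ≤ f (n + m) x ∧
        f (n + m) x ≤ Real.exp C * (f n x * f m (shf^[n] x)))
    (a : S) (xa : ℕ → S) (hxa : xa ∈ shiftSpace T) (hxa0 : xa 0 = a)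
    (n : ℕ) (hn : 0 < n) :
    ZFun T f n a ≤ ENNReal.ofReal M *
      (ENNReal.ofReal (Real.exp (n * C)) * (transferNorm T (f 1)) ^ n) := by
  classical
  have hGspec : ∀ x : {x : ℕ → S // x ∈ shiftSpace T ∧ shf^[n] x = x ∧ x 0 = a},
      (fun i => if i < n then x.1 i else xa (i - n)) ∈ shiftSpace T ∧
      shf^[n] (fun i => if i < n then x.1 i else xa (i - n)) = xa := by
    rintro ⟨x, hx1, hx2, hx3⟩
    have hxn : x n = x 0 := by conv_lhs => rw [periodic_apply hx2 n, Nat.mod_self]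
    constructor
    · intro i
      simp only
      rcases lt_trichotomy (i+1) n with h|h|h
      · rw [if_pos (by omega), if_pos h]; exact hx1 i
      · rw [if_pos (by omega), if_neg (by omega)]
        have h0 : i + 1 - n = 0 := by omega
        rw [h0, hxa0, ← hx3, ← hxn, ← h]
        exact hx1 i
      · rw [if_neg (by omega), if_neg (by omega)]
        have h0 : i + 1 - n = (i - n) + 1 := by omega
        rw [h0]; exact hxa (i - n)
    · funext i
      rw [shf_iterate_apply]
      simp only [if_neg (show ¬ i + n < n by omega), Nat.add_sub_cancel]
  set G : {x : ℕ → S // x ∈ shiftSpace T ∧ shf^[n] x = x ∧ x 0 = a} →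
      {z : ℕ → S // z ∈ shiftSpace T ∧ shf^[n] z = xa} :=
    fun x => ⟨fun i => if i < n then x.1 i else xa (i - n), hGspec x⟩ with hG
  have hGinj : Function.Injective G := by
    intro p q hpq
    have hz : (G p).1 = (G q).1 := congrArg Subtype.val hpq
    apply Subtype.ext; funext i
    have hp : p.1 i = (G p).1 (i % n) := by
      rw [hG]
      simp only [if_pos (Nat.mod_lt i hn)]
      exact periodic_apply p.2.2.1 i
    have hq : q.1 i = (G q).1 (i % n) := by
      rw [hG]
      simp only [if_pos (Nat.mod_lt i hn)]
      exact periodic_apply q.2.2.1 i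
    rw [hp, hq, hz]
  have hterm : ∀ x : {x : ℕ → S // x ∈ shiftSpace T ∧ shf^[n] x = x ∧ x 0 = a},
      ENNReal.ofReal (f n x.1) ≤ ENNReal.ofReal M * ENNReal.ofReal (f n (G x).1) := by
    intro x
    have h1 : f n x.1 ≤ M * f n (G x).1 := by
      refine hBowen n hn _ x.2.1 _ (hGspec x).1 fun i hi => ?_
      simp only [hG, if_pos hi]
    calc ENNReal.ofReal (f n x.1) ≤ ENNReal.ofReal (M * f n (G x).1) :=
          ENNReal.ofReal_le_ofReal h1
      _ = ENNReal.ofReal M * ENNReal.ofReal (f n (G x).1) := ENNReal.ofReal_mul hM.le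
  calc ZFun T f n a
      ≤ ∑' x : {x : ℕ → S // x ∈ shiftSpace T ∧ shf^[n] x = x ∧ x 0 = a},
          ENNReal.ofReal M * ENNReal.ofReal (f n (G x).1) := ENNReal.tsum_le_tsum hterm
    _ = ENNReal.ofReal M * ∑' x : {x : ℕ → S // x ∈ shiftSpace T ∧ shf^[n] x = x ∧ x 0 = a},
          ENNReal.ofReal (f n (G x).1) := ENNReal.tsum_mul_left
    _ ≤ ENNReal.ofReal M * ∑' z : {z : ℕ → S // z ∈ shiftSpace T ∧ shf^[n] z = xa},
          ENNReal.ofReal (f n z.1) :=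
        mul_le_mul_right (ENNReal.tsum_comp_le_tsum_of_injective hGinj _) _
    _ ≤ ENNReal.ofReal M * (ENNReal.ofReal (Real.exp (n * C)) * (transferNorm T (f 1)) ^ n) :=
        mul_le_mul_right (pre_sum_le T f hC hpos hAA n hn xa hxa) _

end Zlemmas


lemma fekete (v : ℕ → ℝ) (N : ℕ) (d : ℝ)
    (h : ∀ m n, N < m → N < n → v m + v n - d ≤ v (m + n)) :
    ∃ L : EReal, L ≠ ⊥ ∧
      Tendsto (fun n : ℕ => ((v n / n : ℝ) : EReal)) atTop (nhds L) ∧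
      ∀ B : ℝ, (∀ n, N < n → v n ≤ B * n) → L ≠ ⊤ := by
  set w : ℕ → ℝ := fun n => v n - d with hw
  have hsup : ∀ m n, N < m → N < n → w m + w n ≤ w (m + n) := by
    intro m n hm hn
    have := h m n hm hn
    simp only [hw]
    linarith
  -- iterated superadditivity
  have hq : ∀ q k r : ℕ, N < k → N < r → 1 ≤ q → (q : ℝ) * w k + w r ≤ w (q * k + r) := by
    intro q
    induction q with
    | zero => intro k r hk hr hq1; omega
    | succ q ih =>
      intro k r hk hr _
      rcases Nat.eq_zero_or_pos q with hq0 | hq0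
      · subst hq0
        simpa using hsup k r hk hr
      · have h1 := ih k r hk hr hq0
        have h2 : w k + w (q * k + r) ≤ w (k + (q * k + r)) :=
          hsup k (q * k + r) hk (by omega)
        have h3 : k + (q * k + r) = (q + 1) * k + r := by ring
        rw [h3] at h2
        push_cast
        nlinarith
  set L : EReal := ⨆ k : {k : ℕ // N < k}, ((w k / k : ℝ) : EReal) with hL
  have hWle : ∀ k : ℕ, N < k → ((w k / k : ℝ) : EReal) ≤ L := by
    intro k hk
    exact le_iSup (fun k : {k : ℕ // N < k} => ((w k.1 / k.1 : ℝ) : EReal)) ⟨k, hk⟩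
  have hLbot : L ≠ ⊥ := by
    intro hbot
    have := hWle (N + 1) (by omega)
    rw [hbot] at this
    exact (EReal.bot_lt_coe _).not_ge this
  refine ⟨L, hLbot, ?_, ?_⟩
  · rw [tendsto_order]
    constructor
    · -- lower bound
      intro b hb
      induction b with
      | bot => exact Eventually.of_forall fun n => EReal.bot_lt_coe _
      | top => exact (not_top_lt hb).elim
      | coe b' =>
        obtain ⟨⟨k, hk⟩, hbk⟩ : ∃ k : {k : ℕ // N < k}, (b' : EReal) < ((w k / k : ℝ) : EReal) := by
          rw [hL] at hb
          exact lt_iSup_iff.mp hb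
        set A : ℝ := w k / k with hA
        have hbA : b' < A := EReal.coe_lt_coe_iff.mp hbk
        have hk1 : 1 ≤ k := by omega
        have hne : (Finset.Icc (N + 1) (N + k)).Nonempty := by
          refine ⟨N + 1, ?_⟩; simp [Finset.mem_Icc]; omega
        set ck : ℝ := (Finset.Icc (N + 1) (N + k)).inf' hne w with hck
        set E : ℝ := (N + k : ℝ) * |A| + |ck| + |d| with hE
        have hE0 : 0 ≤ E := by positivity
        have key : ∀ n : ℕ, k + N + 1 ≤ n → A - E / n ≤ v n / n := by
          intro n hn
          have hn0 : (0 : ℝ) < n := by exact_mod_cast (show 0 < n by omega)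
          set s : ℕ := (n - (N + 1)) % k with hs
          set q : ℕ := (n - (N + 1)) / k with hqdef
          set r : ℕ := N + 1 + s with hr
          have h0 : k * q + s = n - (N + 1) := Nat.div_add_mod _ _
          have hnr : q * k + r = n := by
            have h1 : q * k + r = (k * q + s) + (N + 1) := by ring
            rw [h1, h0]; omega
          have hsk : s < k := Nat.mod_lt _ (by omega)
          have hrN : N < r := by omega
          have hrk : r ≤ N + k := by omega
          have hq1 : 1 ≤ q := by
            rw [hqdef, Nat.one_le_div_iff (by omega)]; omega
          have hwlow : (q : ℝ) * w k + ck ≤ w n := by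
            have h1 := hq q k r hk hrN hq1
            rw [hnr] at h1
            have h2 : ck ≤ w r := Finset.inf'_le _ (by simp [Finset.mem_Icc]; omega)
            linarith
          have hqk : (q : ℝ) * (k : ℝ) = (n : ℝ) - (r : ℝ) := by
            have : ((q * k + r : ℕ) : ℝ) = (n : ℝ) := by rw [hnr]
            push_cast at this
            linarith
          have hwkA : w k = (k : ℝ) * A := by
            rw [hA]; field_simp
          have hvlow : ((n : ℝ) - r) * A + ck + d ≤ v n := by
            have hqwk : (q : ℝ) * w k = ((n : ℝ) - r) * A := by
              rw [hwkA, ← mul_assoc, hqk]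
            have hvw : v n = w n + d := by simp [hw]
            linarith
          rw [sub_le_iff_le_add, ← add_div, le_div_iff₀ hn0]
          have hra : (r : ℝ) * A ≤ (N + k : ℝ) * |A| := by
            have h1 : (r : ℝ) * A ≤ (r : ℝ) * |A| :=
              mul_le_mul_of_nonneg_left (le_abs_self A) (by positivity)
            have h2 : (r : ℝ) ≤ (N + k : ℝ) := by exact_mod_cast hrk
            nlinarith [abs_nonneg A]
          nlinarith [neg_abs_le ck, neg_abs_le d]
        -- now produce the eventual bound
        obtain ⟨n₀, hn₀⟩ := exists_nat_gt (E / (A - b'))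
        rw [eventually_atTop]
        refine ⟨max n₀ (k + N + 1), fun n hn => ?_⟩
        have h1 : k + N + 1 ≤ n := le_trans (le_max_right _ _) hn
        have h2 : (n₀ : ℝ) ≤ n := by exact_mod_cast le_trans (le_max_left _ _) hn
        have hn0 : (0 : ℝ) < n := by exact_mod_cast (show 0 < n by omega)
        have h3 : E / n < A - b' := by
          rw [div_lt_iff₀ hn0]
          have h4 : E / (A - b') < n := lt_of_lt_of_le hn₀ h2
          rw [div_lt_iff₀ (by linarith)] at h4
          linarith
        have hkey := key n h1
        have : b' < v n / n := by linarith
        exact_mod_cast EReal.coe_lt_coe_iff.mpr this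
    · -- upper bound
      intro b hb
      have hLt : L ≠ ⊤ := fun h => by rw [h] at hb; exact (lt_irrefl _ (lt_of_le_of_lt le_top hb))
      obtain ⟨l, hl⟩ : ∃ l : ℝ, L = (l : EReal) :=
        ⟨L.toReal, (EReal.coe_toReal hLt hLbot).symm⟩
      have hwl : ∀ n, N < n → w n / n ≤ l := by
        intro n hn
        have := hWle n hn
        rw [hl] at this
        exact_mod_cast this
      induction b with
      | bot => exact (not_lt_bot hb).elim
      | top => exact Eventually.of_forall fun n => EReal.coe_lt_top _
      | coe b' =>
        have hlb : l < b' := by rw [hl] at hb; exact_mod_cast hb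
        obtain ⟨n₁, hn₁⟩ := exists_nat_gt (|d| / (b' - l))
        rw [eventually_atTop]
        refine ⟨max n₁ (N + 1), fun n hn => ?_⟩
        have h1 : N + 1 ≤ n := le_trans (le_max_right _ _) hn
        have h2 : (n₁ : ℝ) ≤ n := by exact_mod_cast le_trans (le_max_left _ _) hn
        have hn0 : (0 : ℝ) < n := by exact_mod_cast (show 0 < n by omega)
        have h3 : |d| / n < b' - l := by
          rw [div_lt_iff₀ hn0]
          have h4 : |d| / (b' - l) < n := lt_of_lt_of_le hn₁ h2
          rw [div_lt_iff₀ (by linarith)] at h4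
          linarith
        have h5 : w n / n ≤ l := hwl n (by omega)
        have h6 : v n / n = w n / n + d / n := by
          simp only [hw]; ring
        have h7 : d / n ≤ |d| / n := by gcongr; exact le_abs_self d
        have : v n / n < b' := by rw [h6]; linarith
        exact_mod_cast EReal.coe_lt_coe_iff.mpr this
  · intro B hB hTop
    have : L ≤ ((B + |d| : ℝ) : EReal) := by
      rw [hL]
      refine iSup_le fun ⟨k, hk⟩ => ?_
      have hk0 : (0 : ℝ) < k := by exact_mod_cast (show 0 < k by omega)
      have h1 : w k / k ≤ B + |d| := by
        have h2 : v k ≤ B * k := hB k hk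
        have h3 : w k ≤ B * k + |d| := by
          simp only [hw]; have := neg_abs_le d; linarith
        rw [div_le_iff₀ hk0]
        have hk1 : (1 : ℝ) ≤ k := by exact_mod_cast (show 1 ≤ k by omega)
        nlinarith [abs_nonneg d]
      exact_mod_cast EReal.coe_le_coe_iff.mpr h1
    rw [hTop] at this
    exact (EReal.coe_lt_top _).not_ge this

/-- For an almost-additive Bowen sequence on a topologically mixing countable Markov
shift, `lim (1/n) log Z_n(F,a)` exists in `(-∞, +∞]`, and is finite when
`‖L_{f₁}1‖_∞ < ∞`. -/
theorem pressure_limit_exists {S : Type*} [Countable S] (T : S → S → Prop)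
    (hmix : ∀ a b : S, ∃ N : ℕ, ∀ n > N, ∃ x ∈ shiftSpace T, x 0 = a ∧ x n = b)
    (f : ℕ → (ℕ → S) → ℝ) (M C : ℝ) (hM : 0 < M) (hC : 0 ≤ C)
    (hpos : ∀ n, 0 < n → ∀ x ∈ shiftSpace T, 0 < f n x)
    (hBowen : ∀ n, 0 < n → ∀ x ∈ shiftSpace T, ∀ y ∈ shiftSpace T,
      (∀ i < n, x i = y i) → f n x ≤ M * f n y)
    (hAA : ∀ n m, 0 < n → 0 < m → ∀ x ∈ shiftSpace T,
      f n x * f m (shf^[n] x) * Real.exp (-C) ≤ f (n + m) x ∧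
        f (n + m) x ≤ Real.exp C * (f n x * f m (shf^[n] x))) :
    ∀ a : S, ∃ L : EReal, L ≠ ⊥ ∧
      Tendsto (fun n : ℕ => ENNReal.log (ZFun T f n a) / ((n : ℝ) : EReal)) atTop (nhds L) ∧
      (transferNorm T (f 1) ≠ ⊤ → L ≠ ⊤) := by
  intro a
  obtain ⟨N, hZpos⟩ := Z_pos T f hpos a (hmix a a)
  obtain ⟨N', hN'⟩ := hmix a a
  obtain ⟨xa, hxa, hxa0, -⟩ := hN' (N' + 1) (by omega)
  have hsuper := Z_superadd T f hM hpos hBowen hAA a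
  have hupper : transferNorm T (f 1) ≠ ⊤ →
      ∃ B : ℝ, ∀ n : ℕ, 0 < n → ZFun T f n a ≤ ENNReal.ofReal (Real.exp (B * n)) := by
    intro hK
    set Kr := (transferNorm T (f 1)).toReal with hKr
    refine ⟨|Real.log M| + C + |Real.log Kr|, fun n hn => ?_⟩
    have h1 := Z_le T f hM hC hpos hBowen hAA a xa hxa hxa0 n hn
    have hKeq : transferNorm T (f 1) = ENNReal.ofReal Kr := (ENNReal.ofReal_toReal hK).symm
    rw [hKeq] at h1
    have h2 : ENNReal.ofReal M * (ENNReal.ofReal (Real.exp (n * C)) * (ENNReal.ofReal Kr) ^ n)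
        = ENNReal.ofReal (M * (Real.exp (n * C) * Kr ^ n)) := by
      rw [← ENNReal.ofReal_pow ENNReal.toReal_nonneg, ← ENNReal.ofReal_mul (Real.exp_pos _).le,
          ← ENNReal.ofReal_mul hM.le]
    rw [h2] at h1
    refine h1.trans (ENNReal.ofReal_le_ofReal ?_)
    have hn1 : (1 : ℝ) ≤ n := by exact_mod_cast hn
    rcases eq_or_lt_of_le (show (0:ℝ) ≤ Kr from ENNReal.toReal_nonneg) with h0 | h0
    · rw [← h0, zero_pow (by omega : n ≠ 0), mul_zero, mul_zero]
      exact (Real.exp_pos _).le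
    · have hKrn : Kr ^ n = Real.exp (↑n * Real.log Kr) := by
        rw [Real.exp_nat_mul, Real.exp_log h0]
      have hMe : M = Real.exp (Real.log M) := (Real.exp_log hM).symm
      calc M * (Real.exp (↑n * C) * Kr ^ n)
          = Real.exp (Real.log M + (↑n * C + ↑n * Real.log Kr)) := by
            rw [Real.exp_add, Real.exp_add, ← hKrn, ← hMe]
        _ ≤ Real.exp ((|Real.log M| + C + |Real.log Kr|) * ↑n) := by
            apply Real.exp_le_exp.mpr
            nlinarith [le_abs_self (Real.log M), le_abs_self (Real.log Kr),
              abs_nonneg (Real.log M), abs_nonneg (Real.log Kr), hC,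
              mul_le_mul_of_nonneg_left (le_abs_self (Real.log Kr))
                (by positivity : (0:ℝ) ≤ (n:ℝ))]
  by_cases htop : ∃ n : ℕ, 0 < n ∧ ZFun T f n a = ⊤
  · obtain ⟨n₀, hn₀, hZtop⟩ := htop
    refine ⟨⊤, by simp, ?_, ?_⟩
    · refine Tendsto.congr' ?_ (tendsto_const_nhds : Tendsto (fun _ : ℕ => (⊤ : EReal)) atTop _)
      rw [EventuallyEq, eventually_atTop]
      refine ⟨n₀ + N + 1, fun m hm => ?_⟩
      have hmZ : ZFun T f m a = ⊤ := by
        have hmeq : n₀ + (m - n₀) = m := by omega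
        have h2 := hsuper n₀ (m - n₀) hn₀ (by omega)
        rw [hmeq, hZtop] at h2
        have h3 : ZFun T f (m - n₀) a ≠ 0 := (hZpos _ (by omega)).ne'
        have hc0 : ENNReal.ofReal (Real.exp (-C) / (M * M)) ≠ 0 := by
          refine (ENNReal.ofReal_pos.mpr ?_).ne'
          positivity
        rw [ENNReal.top_mul h3, ENNReal.mul_top hc0] at h2
        exact top_le_iff.mp h2
      rw [hmZ]
      symm
      rw [ENNReal.log_top]
      have hm0 : (0 : EReal) < ((m : ℝ) : EReal) := by
        apply EReal.coe_pos.mpr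
        exact_mod_cast (show 0 < m by omega)
      exact EReal.top_div_of_pos_ne_top hm0 (EReal.coe_ne_top _)
    · intro hK
      exfalso
      obtain ⟨B, hB⟩ := hupper hK
      exact ENNReal.ofReal_ne_top (top_le_iff.mp (hZtop ▸ hB n₀ hn₀))
  · push_neg at htop
    set v : ℕ → ℝ := fun n => Real.log ((ZFun T f n a).toReal) with hv
    have hlog : ∀ n : ℕ, N < n → ENNReal.log (ZFun T f n a) = ((v n : ℝ) : EReal) := by
      intro n hn
      exact ENNReal.log_pos_real (hZpos n hn).ne' (htop n (by omega))
    set d : ℝ := C + Real.log (M * M) with hd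
    have hfek : ∀ m n, N < m → N < n → v m + v n - d ≤ v (m + n) := by
      intro m n hm hn
      have h2 := hsuper m n (by omega) (by omega)
      have hfin : ZFun T f (m + n) a ≠ ⊤ := htop (m + n) (by omega)
      have h3 := ENNReal.toReal_mono hfin h2
      rw [ENNReal.toReal_mul, ENNReal.toReal_mul,
        ENNReal.toReal_ofReal (by positivity : (0:ℝ) ≤ Real.exp (-C) / (M * M))] at h3
      have hm0 : 0 < (ZFun T f m a).toReal :=
        ENNReal.toReal_pos (hZpos m hm).ne' (htop m (by omega))
      have hn0 : 0 < (ZFun T f n a).toReal :=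
        ENNReal.toReal_pos (hZpos n hn).ne' (htop n (by omega))
      have hc0 : (0:ℝ) < Real.exp (-C) / (M * M) := by positivity
      have h4 : Real.log (Real.exp (-C) / (M * M) * ((ZFun T f m a).toReal
          * (ZFun T f n a).toReal)) ≤ v (m + n) := by
        refine Real.log_le_log (by positivity) h3
      rw [Real.log_mul hc0.ne' (by positivity), Real.log_mul hm0.ne' hn0.ne',
        Real.log_div (Real.exp_pos _).ne' (by positivity), Real.log_exp] at h4
      simp only [hv, hd] at h4 ⊢
      linarith
    obtain ⟨L, hL1, hL2, hL3⟩ := fekete v N d hfek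
    refine ⟨L, hL1, ?_, ?_⟩
    · refine Tendsto.congr' ?_ hL2
      rw [EventuallyEq, eventually_atTop]
      refine ⟨N + 1, fun n hn => ?_⟩
      rw [hlog n (by omega), ← EReal.coe_div]
    · intro hK
      obtain ⟨B, hB⟩ := hupper hK
      apply hL3 B
      intro n hn
      have h1 := hB n (by omega)
      have h2 : (ZFun T f n a).toReal ≤ Real.exp (B * n) := by
        have h3 := ENNReal.toReal_mono ENNReal.ofReal_ne_top h1
        rwa [ENNReal.toReal_ofReal (Real.exp_pos _).le] at h3
      calc v n ≤ Real.log (Real.exp (B * n)) :=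
            Real.log_le_log (ENNReal.toReal_pos (hZpos n hn).ne' (htop n (by omega))) h2
        _ = B * n := Real.log_exp _
end
end

section
/- Let {log f_n} be an almost-additive Bowen sequence on a topologically mixing countable Markov shift Σ. Then the value P(F) = lim_{n→∞} (1/n) log Z_n(F,a) is independent of the chosen symbol a ∈ S. -/
open scoped ENNReal
open Filter

noncomputable section

lemma shf_iter {S : Type*} (x : ℕ → S) (n : ℕ) : shf^[n] x = fun i => x (i + n) := by
  induction n with
  | zero => simp
  | succ n ih =>
    rw [Function.iterate_succ_apply', ih]
    funext i
    show (fun i => x (i + n)) (i+1) = _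
    simp only []
    congr 1
    omega

lemma shf_iter_apply {S : Type*} (x : ℕ → S) (n i : ℕ) : shf^[n] x i = x (i + n) := by
  rw [shf_iter]

lemma shf_iter_mem {S : Type*} {T : S → S → Prop} {x : ℕ → S} (hx : x ∈ shiftSpace T) (n : ℕ) :
    shf^[n] x ∈ shiftSpace T := by
  intro i
  rw [shf_iter_apply, shf_iter_apply]
  have h : i + 1 + n = i + n + 1 := by omega
  rw [h]
  exact hx (i + n)

lemma periodic_mod {S : Type*} {x : ℕ → S} {L : ℕ} (hL : 0 < L) (hx : shf^[L] x = x) :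
    ∀ i, x i = x (i % L) := by
  have key : ∀ i, x (i + L) = x i := by
    intro i
    conv_rhs => rw [← hx]
    rw [shf_iter_apply]
  intro i
  induction i using Nat.strong_induction_on with
  | _ i ih =>
    rcases lt_or_ge i L with h | h
    · rw [Nat.mod_eq_of_lt h]
    · have h1 : i = (i - L) + L := by omega
      have h2 : (i - L) % L = i % L := by
        conv_rhs => rw [h1, Nat.add_mod_right]
      calc x i = x ((i - L) + L) := by rw [← h1]
        _ = x (i - L) := key _
        _ = x ((i - L) % L) := ih (i - L) (by omega)
        _ = x (i % L) := by rw [h2]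

/-- periodic extension -/
def pext {S : Type*} (L : ℕ) (w : ℕ → S) : ℕ → S := fun i => w (i % L)

lemma pext_periodic {S : Type*} (L : ℕ) (w : ℕ → S) : shf^[L] (pext L w) = pext L w := by
  funext i
  rw [shf_iter_apply]
  simp [pext, Nat.add_mod_right]

lemma pext_agree {S : Type*} {L : ℕ} (w : ℕ → S) {i : ℕ} (h : i < L) : pext L w i = w i := by
  simp [pext, Nat.mod_eq_of_lt h]

lemma pext_mem {S : Type*} {T : S → S → Prop} {L : ℕ} (hL : 0 < L) {w : ℕ → S}
    (hw : ∀ i, i + 1 < L → T (w i) (w (i + 1))) (hcyc : T (w (L - 1)) (w 0)) :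
    pext L w ∈ shiftSpace T := by
  intro i
  show T (w (i % L)) (w ((i + 1) % L))
  have hr : i % L < L := Nat.mod_lt _ hL
  rcases eq_or_lt_of_le (Nat.succ_le_of_lt hr) with h | h
  all_goals have hkey : (i % L + 1) % L = (i + 1) % L := Nat.mod_add_mod i L 1
  · have h0 : (i + 1) % L = 0 := by
      rw [← hkey]
      have : i % L + 1 = L := by omega
      rw [this, Nat.mod_self]
    have h2 : i % L = L - 1 := by omega
    rw [h0, h2]
    exact hcyc
  · have h1 : (i + 1) % L = i % L + 1 := by
      rw [← hkey, Nat.mod_eq_of_lt h]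
    rw [h1]
    exact hw _ h

lemma Zpos {S : Type*} {T : S → S → Prop} {f : ℕ → (ℕ → S) → ℝ}
    (hpos : ∀ n, 0 < n → ∀ x ∈ shiftSpace T, 0 < f n x)
    {a : S} {N : ℕ} (hN : ∀ n > N, ∃ x ∈ shiftSpace T, x 0 = a ∧ x n = a) :
    ∀ n, N < n → 0 < ZFun T f n a := by
  intro n hn
  have hn0 : 0 < n := by omega
  obtain ⟨x, hx, hx0, hxn⟩ := hN n hn
  have hzmem : pext n x ∈ shiftSpace T := by
    refine pext_mem hn0 (fun i _ => hx i) ?_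
    · have h1 : n - 1 + 1 = n := by omega
      have h2 := hx (n - 1)
      rw [h1] at h2
      have h3 : x n = x 0 := by rw [hxn, hx0]
      rw [h3] at h2
      exact h2
  have hz0 : pext n x 0 = a := by rw [pext_agree _ hn0, hx0]
  have hmem : (pext n x) ∈ {x : ℕ → S | x ∈ shiftSpace T ∧ shf^[n] x = x ∧ x 0 = a} :=
    ⟨hzmem, pext_periodic n x, hz0⟩
  calc (0 : ℝ≥0∞) < ENNReal.ofReal (f n (pext n x)) :=
        ENNReal.ofReal_pos.2 (hpos n hn0 _ hzmem)
    _ ≤ ZFun T f n a := ENNReal.le_tsum (⟨pext n x, hmem⟩ :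
        {x : ℕ → S // x ∈ shiftSpace T ∧ shf^[n] x = x ∧ x 0 = a})

def glueWord {S : Type*} (m : ℕ) (x y : ℕ → S) : ℕ → S :=
  fun i => if i < m then x i else y (i - m)

section Glue

variable {S : Type*} {T : S → S → Prop} {f : ℕ → (ℕ → S) → ℝ} {M C : ℝ}

lemma Zsuper (hM : 0 < M)
    (hpos : ∀ n, 0 < n → ∀ x ∈ shiftSpace T, 0 < f n x)
    (hBowen : ∀ n, 0 < n → ∀ x ∈ shiftSpace T, ∀ y ∈ shiftSpace T,
      (∀ i < n, x i = y i) → f n x ≤ M * f n y)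
    (hAA : ∀ n m, 0 < n → 0 < m → ∀ x ∈ shiftSpace T,
      f n x * f m (shf^[n] x) * Real.exp (-C) ≤ f (n + m) x ∧
        f (n + m) x ≤ Real.exp C * (f n x * f m (shf^[n] x)))
    (a : S) (m n : ℕ) (hm : 0 < m) (hn : 0 < n) :
    ENNReal.ofReal (Real.exp (-C) / (M * M)) * (ZFun T f m a * ZFun T f n a)
      ≤ ZFun T f (m + n) a := by
  classical
  set L := m + n with hL
  have hL0 : 0 < L := by omega
  set A := {x : ℕ → S // x ∈ shiftSpace T ∧ shf^[m] x = x ∧ x 0 = a} with hA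
  set B := {x : ℕ → S // x ∈ shiftSpace T ∧ shf^[n] x = x ∧ x 0 = a} with hB
  set Ω := {x : ℕ → S // x ∈ shiftSpace T ∧ shf^[L] x = x ∧ x 0 = a} with hΩ
  -- facts about gluing
  have word_lt : ∀ (x y : ℕ → S) i, i < m → glueWord m x y i = x i := by
    intro x y i hi; simp [glueWord, hi]
  have word_ge : ∀ (x y : ℕ → S) i, m ≤ i → glueWord m x y i = y (i - m) := by
    intro x y i hi
    simp [glueWord, Nat.not_lt.2 hi]
  have hglue : ∀ (p : A × B), pext L (glueWord m p.1.1 p.2.1) ∈ shiftSpace T ∧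
      shf^[L] (pext L (glueWord m p.1.1 p.2.1)) = pext L (glueWord m p.1.1 p.2.1) ∧
      pext L (glueWord m p.1.1 p.2.1) 0 = a := by
    rintro ⟨⟨x, hx, hxp, hx0⟩, ⟨y, hy, hyp, hy0⟩⟩
    dsimp only
    have hxm : x m = a := by
      rw [periodic_mod hm hxp m, Nat.mod_self, hx0]
    have hyn : y n = a := by
      rw [periodic_mod hn hyp n, Nat.mod_self, hy0]
    refine ⟨pext_mem hL0 ?_ ?_, pext_periodic _ _, ?_⟩
    · intro i hi
      by_cases h1 : i + 1 < m
      · rw [word_lt _ _ _ (by omega), word_lt _ _ _ h1]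
        exact hx i
      · by_cases h2 : i + 1 = m
        · rw [word_lt _ _ _ (by omega), word_ge _ _ _ (by omega)]
          have h3 : i + 1 - m = 0 := by omega
          rw [h3, hy0, ← hxm, ← h2]
          exact hx i
        · rw [word_ge _ _ _ (by omega), word_ge _ _ _ (by omega)]
          have h3 : i + 1 - m = (i - m) + 1 := by omega
          rw [h3]
          exact hy (i - m)
    · rw [word_ge _ _ _ (by omega), word_lt _ _ _ hm]
      have h3 : L - 1 - m = n - 1 := by omega
      rw [h3, hx0, ← hy0]
      have h4 : T (y (n - 1)) (y (n - 1 + 1)) := hy (n - 1)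
      have h5 : n - 1 + 1 = n := by omega
      rw [h5, hyn, ← hy0] at h4
      exact h4
    · rw [pext_agree _ hL0, word_lt _ _ _ hm, hx0]
  -- the injection
  set ι : A × B → Ω := fun p => ⟨pext L (glueWord m p.1.1 p.2.1),
    (hglue p).1, (hglue p).2.1, (hglue p).2.2⟩ with hι
  have agree1 : ∀ (p : A × B) i, i < m → pext L (glueWord m p.1.1 p.2.1) i = p.1.1 i := by
    intro p i hi
    rw [pext_agree _ (by omega), word_lt _ _ _ hi]
  have agree2 : ∀ (p : A × B) i, i < n →
      shf^[m] (pext L (glueWord m p.1.1 p.2.1)) i = p.2.1 i := by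
    intro p i hi
    rw [shf_iter_apply, pext_agree _ (by omega), word_ge _ _ _ (by omega),
      Nat.add_sub_cancel]
  have hinj : Function.Injective ι := by
    rintro ⟨⟨x, hx, hxp, hx0⟩, ⟨y, hy, hyp, hy0⟩⟩ ⟨⟨x', hx', hxp', hx0'⟩, ⟨y', hy', hyp', hy0'⟩⟩ h
    have hval : pext L (glueWord m x y) = pext L (glueWord m x' y') := congrArg Subtype.val h
    have hx_eq : x = x' := by
      funext i
      have e1 := agree1 ⟨⟨x, hx, hxp, hx0⟩, ⟨y, hy, hyp, hy0⟩⟩ (i % m) (Nat.mod_lt _ hm)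
      have e2 := agree1 ⟨⟨x', hx', hxp', hx0'⟩, ⟨y', hy', hyp', hy0'⟩⟩ (i % m) (Nat.mod_lt _ hm)
      dsimp only at e1 e2
      rw [periodic_mod hm hxp i, periodic_mod hm hxp' i, ← e1, ← e2, hval]
    have hy_eq : y = y' := by
      funext i
      have e1 := agree2 ⟨⟨x, hx, hxp, hx0⟩, ⟨y, hy, hyp, hy0⟩⟩ (i % n) (Nat.mod_lt _ hn)
      have e2 := agree2 ⟨⟨x', hx', hxp', hx0'⟩, ⟨y', hy', hyp', hy0'⟩⟩ (i % n) (Nat.mod_lt _ hn)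
      dsimp only at e1 e2
      rw [periodic_mod hn hyp i, periodic_mod hn hyp' i, ← e1, ← e2, hval]
    exact Prod.ext_iff.mpr ⟨Subtype.ext hx_eq, Subtype.ext hy_eq⟩
  -- pointwise bound
  have hptwise : ∀ p : A × B,
      ENNReal.ofReal (Real.exp (-C) / (M * M)) *
        (ENNReal.ofReal (f m p.1.1) * ENNReal.ofReal (f n p.2.1))
        ≤ ENNReal.ofReal (f L (ι p).1) := by
    rintro ⟨⟨x, hx, hxp, hx0⟩, ⟨y, hy, hyp, hy0⟩⟩
    show ENNReal.ofReal (Real.exp (-C) / (M * M)) *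
        (ENNReal.ofReal (f m x) * ENNReal.ofReal (f n y))
        ≤ ENNReal.ofReal (f L (pext L (glueWord m x y)))
    set z := pext L (glueWord m x y) with hzdef
    have hzmem : z ∈ shiftSpace T :=
      (hglue ⟨⟨x, hx, hxp, hx0⟩, ⟨y, hy, hyp, hy0⟩⟩).1
    have hz2 : shf^[m] z ∈ shiftSpace T := shf_iter_mem hzmem m
    have h1 : f m x ≤ M * f m z := by
      refine hBowen m hm x hx z hzmem ?_
      intro i hi
      have := (agree1 ⟨⟨x, hx, hxp, hx0⟩, ⟨y, hy, hyp, hy0⟩⟩ i hi).symm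
      exact this
    have h2 : f n y ≤ M * f n (shf^[m] z) := by
      refine hBowen n hn y hy _ hz2 ?_
      intro i hi
      have := (agree2 ⟨⟨x, hx, hxp, hx0⟩, ⟨y, hy, hyp, hy0⟩⟩ i hi).symm
      exact this
    have h3 : f m z * f n (shf^[m] z) * Real.exp (-C) ≤ f (m + n) z :=
      (hAA m n hm hn z hzmem).1
    have hfm : 0 < f m x := hpos m hm x hx
    have hfn : 0 < f n y := hpos n hn y hy
    have hfz : 0 < f m z := hpos m hm z hzmem
    have hfz2 : 0 < f n (shf^[m] z) := hpos n hn _ hz2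
    have hreal : Real.exp (-C) / (M * M) * (f m x * f n y) ≤ f L z := by
      have h4 : f m x * f n y ≤ (M * f m z) * (M * f n (shf^[m] z)) :=
        mul_le_mul h1 h2 hfn.le (by positivity)
      have h5 : Real.exp (-C) / (M * M) * (f m x * f n y)
          ≤ Real.exp (-C) / (M * M) * ((M * f m z) * (M * f n (shf^[m] z))) :=
        mul_le_mul_of_nonneg_left h4 (by positivity)
      have h6 : Real.exp (-C) / (M * M) * ((M * f m z) * (M * f n (shf^[m] z)))
          = f m z * f n (shf^[m] z) * Real.exp (-C) := by
        field_simp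
      rw [h6] at h5
      exact h5.trans h3
    calc ENNReal.ofReal (Real.exp (-C) / (M * M)) *
        (ENNReal.ofReal (f m x) * ENNReal.ofReal (f n y))
        = ENNReal.ofReal (Real.exp (-C) / (M * M) * (f m x * f n y)) := by
          rw [ENNReal.ofReal_mul (by positivity), ENNReal.ofReal_mul hfm.le]
      _ ≤ ENNReal.ofReal (f L z) := ENNReal.ofReal_le_ofReal hreal
  -- put together
  calc ENNReal.ofReal (Real.exp (-C) / (M * M)) * (ZFun T f m a * ZFun T f n a)
      = ∑' p : A × B, ENNReal.ofReal (Real.exp (-C) / (M * M)) *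
          (ENNReal.ofReal (f m p.1.1) * ENNReal.ofReal (f n p.2.1)) := by
        rw [ENNReal.tsum_mul_left]
        congr 1
        rw [ENNReal.tsum_prod (f := fun (xa : A) (yb : B) =>
          ENNReal.ofReal (f m xa.1) * ENNReal.ofReal (f n yb.1))]
        calc ZFun T f m a * ZFun T f n a
            = ∑' xa : A, ENNReal.ofReal (f m xa.1) * ZFun T f n a :=
              ENNReal.tsum_mul_right.symm
          _ = ∑' xa : A, ∑' yb : B, ENNReal.ofReal (f m xa.1) * ENNReal.ofReal (f n yb.1) := by
              congr 1
              funext xa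
              exact ENNReal.tsum_mul_left.symm
    _ ≤ ∑' p : A × B, ENNReal.ofReal (f L (ι p).1) := ENNReal.tsum_le_tsum hptwise
    _ ≤ ∑' z : Ω, ENNReal.ofReal (f L z.1) :=
        ENNReal.tsum_comp_le_tsum_of_injective hinj (fun z : Ω => ENNReal.ofReal (f L z.1))
    _ = ZFun T f (m + n) a := rfl

end Glue

section Comp

variable {S : Type*} {T : S → S → Prop} {f : ℕ → (ℕ → S) → ℝ} {M C : ℝ}

lemma Zcomp (hM : 0 < M)
    (hpos : ∀ n, 0 < n → ∀ x ∈ shiftSpace T, 0 < f n x)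
    (hBowen : ∀ n, 0 < n → ∀ x ∈ shiftSpace T, ∀ y ∈ shiftSpace T,
      (∀ i < n, x i = y i) → f n x ≤ M * f n y)
    (hAA : ∀ n m, 0 < n → 0 < m → ∀ x ∈ shiftSpace T,
      f n x * f m (shf^[n] x) * Real.exp (-C) ≤ f (n + m) x ∧
        f (n + m) x ≤ Real.exp C * (f n x * f m (shf^[n] x)))
    (hmix : ∀ a b : S, ∃ N : ℕ, ∀ n > N, ∃ x ∈ shiftSpace T, x 0 = a ∧ x n = b)
    (a b : S) :
    ∃ (k : ℕ) (c : ℝ≥0∞), 0 < k ∧ 0 < c ∧ c ≠ ⊤ ∧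
      ∀ n, 0 < n → c * ZFun T f n a ≤ ZFun T f (n + 2 * k) b := by
  classical
  obtain ⟨N1, hN1⟩ := hmix b a
  obtain ⟨N2, hN2⟩ := hmix a b
  set k := max N1 N2 + 1 with hk
  have hk0 : 0 < k := by omega
  obtain ⟨p, hp, hp0, hpk⟩ := hN1 k (by omega)
  obtain ⟨q, hq, hq0, hqk⟩ := hN2 k (by omega)
  have hfp : 0 < f k p := hpos k hk0 p hp
  have hfq : 0 < f k q := hpos k hk0 q hq
  set e := Real.exp (-C) with he
  have he0 : 0 < e := Real.exp_pos _
  set cexp := (e * e * f k p * f k q) / (M * M * M) with hcexp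
  have hcexp0 : 0 < cexp := by positivity
  refine ⟨k, ENNReal.ofReal cexp, hk0, ENNReal.ofReal_pos.2 hcexp0, ENNReal.ofReal_ne_top, ?_⟩
  intro n hn
  set L := n + 2 * k with hLdef
  have hL0 : 0 < L := by omega
  set A := {x : ℕ → S // x ∈ shiftSpace T ∧ shf^[n] x = x ∧ x 0 = a} with hA
  set Ω := {x : ℕ → S // x ∈ shiftSpace T ∧ shf^[L] x = x ∧ x 0 = b} with hΩ
  set w : (ℕ → S) → (ℕ → S) := fun x i =>
    if i < k then p i else if i < k + n then x (i - k) else q (i - k - n) with hw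
  have w_lt : ∀ (x : ℕ → S) i, i < k → w x i = p i := by
    intro x i hi; simp [hw, hi]
  have w_mid : ∀ (x : ℕ → S) i, k ≤ i → i < k + n → w x i = x (i - k) := by
    intro x i h1 h2; simp [hw, Nat.not_lt.2 h1, h2]
  have w_hi : ∀ (x : ℕ → S) i, k + n ≤ i → w x i = q (i - k - n) := by
    intro x i h1; simp [hw, Nat.not_lt.2 (by omega : k ≤ i), Nat.not_lt.2 h1]
  have hglue : ∀ x : A, pext L (w x.1) ∈ shiftSpace T ∧
      shf^[L] (pext L (w x.1)) = pext L (w x.1) ∧ pext L (w x.1) 0 = b := by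
    rintro ⟨x, hx, hxp, hx0⟩
    dsimp only
    have hxn : x n = a := by
      rw [periodic_mod hn hxp n, Nat.mod_self, hx0]
    refine ⟨pext_mem hL0 ?_ ?_, pext_periodic _ _, ?_⟩
    · intro i hi
      by_cases h1 : i + 1 < k
      · rw [w_lt _ _ (by omega), w_lt _ _ h1]; exact hp i
      · by_cases h2 : i + 1 = k
        · rw [w_lt _ _ (by omega), w_mid _ _ (by omega) (by omega)]
          have h3 : i + 1 - k = 0 := by omega
          rw [h3, hx0, ← hpk, ← h2]
          exact hp i
        · by_cases h3 : i + 1 < k + n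
          · rw [w_mid _ _ (by omega) (by omega), w_mid _ _ (by omega) h3]
            have h4 : i + 1 - k = (i - k) + 1 := by omega
            rw [h4]
            exact hx (i - k)
          · by_cases h4 : i + 1 = k + n
            · rw [w_mid _ _ (by omega) (by omega), w_hi _ _ (by omega)]
              have h5 : i + 1 - k - n = 0 := by omega
              rw [h5, hq0, ← hxn]
              have h6 : i - k + 1 = n := by omega
              have h7 := hx (i - k)
              rw [h6] at h7
              exact h7
            · rw [w_hi _ _ (by omega), w_hi _ _ (by omega)]
              have h5 : i + 1 - k - n = (i - k - n) + 1 := by omega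
              rw [h5]
              exact hq (i - k - n)
    · rw [w_hi _ _ (by omega), w_lt _ _ hk0]
      have h3 : L - 1 - k - n = k - 1 := by omega
      rw [h3, hp0, ← hqk]
      have h4 := hq (k - 1)
      have h5 : k - 1 + 1 = k := by omega
      rw [h5] at h4
      exact h4
    · rw [pext_agree _ hL0, w_lt _ _ hk0, hp0]
  set ι : A → Ω := fun x => ⟨pext L (w x.1), (hglue x).1, (hglue x).2.1, (hglue x).2.2⟩ with hι
  have agP : ∀ (x : A) i, i < k → pext L (w x.1) i = p i := by
    intro x i hi
    rw [pext_agree _ (by omega), w_lt _ _ hi]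
  have agX : ∀ (x : A) i, i < n → shf^[k] (pext L (w x.1)) i = x.1 i := by
    intro x i hi
    rw [shf_iter_apply, pext_agree _ (by omega), w_mid _ _ (by omega) (by omega),
      Nat.add_sub_cancel]
  have agQ : ∀ (x : A) i, i < k → shf^[n + k] (pext L (w x.1)) i = q i := by
    intro x i hi
    rw [shf_iter_apply, pext_agree _ (by omega), w_hi _ _ (by omega)]
    congr 1
    omega
  have hinj : Function.Injective ι := by
    rintro ⟨x, hx, hxp, hx0⟩ ⟨x', hx', hxp', hx0'⟩ h
    have hval : pext L (w x) = pext L (w x') := congrArg Subtype.val h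
    refine Subtype.ext ?_
    funext i
    show x i = x' i
    have e1 := agX ⟨x, hx, hxp, hx0⟩ (i % n) (Nat.mod_lt _ hn)
    have e2 := agX ⟨x', hx', hxp', hx0'⟩ (i % n) (Nat.mod_lt _ hn)
    dsimp only at e1 e2
    rw [periodic_mod hn hxp i, periodic_mod hn hxp' i, ← e1, ← e2, hval]
  have hptwise : ∀ x : A,
      ENNReal.ofReal cexp * ENNReal.ofReal (f n x.1) ≤ ENNReal.ofReal (f L (ι x).1) := by
    rintro ⟨x, hx, hxp, hx0⟩
    show ENNReal.ofReal cexp * ENNReal.ofReal (f n x) ≤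
      ENNReal.ofReal (f L (pext L (w x)))
    set z := pext L (w x) with hzdef
    have hzmem : z ∈ shiftSpace T := (hglue ⟨x, hx, hxp, hx0⟩).1
    have hz1 : shf^[k] z ∈ shiftSpace T := shf_iter_mem hzmem k
    have hz2 : shf^[n + k] z ∈ shiftSpace T := shf_iter_mem hzmem (n + k)
    have h1 : f k p ≤ M * f k z := by
      refine hBowen k hk0 p hp z hzmem ?_
      intro i hi
      have := (agP ⟨x, hx, hxp, hx0⟩ i hi).symm
      exact this
    have h2 : f n x ≤ M * f n (shf^[k] z) := by
      refine hBowen n hn x hx _ hz1 ?_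
      intro i hi
      have := (agX ⟨x, hx, hxp, hx0⟩ i hi).symm
      exact this
    have h3 : f k q ≤ M * f k (shf^[n + k] z) := by
      refine hBowen k hk0 q hq _ hz2 ?_
      intro i hi
      have := (agQ ⟨x, hx, hxp, hx0⟩ i hi).symm
      exact this
    have hA1 : f k z * f (n + k) (shf^[k] z) * e ≤ f (k + (n + k)) z :=
      (hAA k (n + k) hk0 (by omega) z hzmem).1
    have hA2' : f n (shf^[k] z) * f k (shf^[n] (shf^[k] z)) * e ≤ f (n + k) (shf^[k] z) :=
      (hAA n k hn hk0 _ hz1).1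
    have hiter : shf^[n] (shf^[k] z) = shf^[n + k] z := (Function.iterate_add_apply _ n k z).symm
    rw [hiter] at hA2'
    set u1 := f k z with hu1
    set u2 := f n (shf^[k] z) with hu2
    set u3 := f k (shf^[n + k] z) with hu3
    have hu1p : 0 < u1 := hpos k hk0 z hzmem
    have hu2p : 0 < u2 := hpos n hn _ hz1
    have hu3p : 0 < u3 := hpos k hk0 _ hz2
    have hreal : cexp * f n x ≤ f L z := by
      have hfnx : 0 < f n x := hpos n hn x hx
      have hb : f k p * f n x * f k q ≤ (M * u1) * (M * u2) * (M * u3) :=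
        mul_le_mul (mul_le_mul h1 h2 hfnx.le (by positivity)) h3 hfq.le (by positivity)
      have hstep : cexp * f n x ≤ e * e / (M * M * M) * ((M * u1) * (M * u2) * (M * u3)) := by
        have h5 : cexp * f n x = e * e / (M * M * M) * (f k p * f n x * f k q) := by
          rw [hcexp]; field_simp
        rw [h5]
        exact mul_le_mul_of_nonneg_left hb (by positivity)
      have heq : e * e / (M * M * M) * ((M * u1) * (M * u2) * (M * u3))
          = u1 * (u2 * u3 * e) * e := by
        field_simp
      rw [heq] at hstep
      refine hstep.trans ?_
      have m1 : u1 * (u2 * u3 * e) * e ≤ u1 * f (n + k) (shf^[k] z) * e := by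
        refine mul_le_mul_of_nonneg_right ?_ he0.le
        exact mul_le_mul_of_nonneg_left hA2' hu1p.le
      refine m1.trans ?_
      have hidx : L = k + (n + k) := by omega
      rw [hidx]
      exact hA1
    calc ENNReal.ofReal cexp * ENNReal.ofReal (f n x)
        = ENNReal.ofReal (cexp * f n x) := (ENNReal.ofReal_mul hcexp0.le).symm
      _ ≤ ENNReal.ofReal (f L z) := ENNReal.ofReal_le_ofReal hreal
  calc ENNReal.ofReal cexp * ZFun T f n a
      = ∑' x : A, ENNReal.ofReal cexp * ENNReal.ofReal (f n x.1) := ENNReal.tsum_mul_left.symm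
    _ ≤ ∑' x : A, ENNReal.ofReal (f L (ι x).1) := ENNReal.tsum_le_tsum hptwise
    _ ≤ ∑' z : Ω, ENNReal.ofReal (f L z.1) :=
        ENNReal.tsum_comp_le_tsum_of_injective hinj (fun z : Ω => ENNReal.ofReal (f L z.1))
    _ = ZFun T f (n + 2 * k) b := rfl

end Comp

section Fekete

lemma ratio_tendsto (N m : ℕ) (hm : 0 < m) (A B : ℝ) :
    Tendsto (fun n : ℕ => ((((n - (N+1))/m : ℕ) : ℝ) * A + B) / (n:ℝ)) atTop
      (nhds (A / m)) := by
  set q : ℕ → ℕ := fun n => (n - (N+1)) / m with hq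
  have hm0 : (0:ℝ) < m := by exact_mod_cast hm
  have hq_div : Tendsto (fun n : ℕ => (q n : ℝ) / n) atTop (nhds (1 / m)) := by
    set D : ℝ := ((N:ℝ) + 1 + m) / m with hD
    have hlower : Tendsto (fun n : ℕ => 1/(m:ℝ) - D * (1/n)) atTop (nhds (1/m)) := by
      have h1 : Tendsto (fun n : ℕ => D * (1/(n:ℝ))) atTop (nhds 0) := by
        simpa using tendsto_one_div_atTop_nhds_zero_nat.const_mul D
      have h2 := (tendsto_const_nhds (x := 1/(m:ℝ)) (f := atTop (α := ℕ))).sub h1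
      simpa using h2
    refine tendsto_of_tendsto_of_tendsto_of_le_of_le' hlower tendsto_const_nhds ?_ ?_
    · filter_upwards [eventually_ge_atTop (N + 1 + m)] with n hn
      have hn0 : (0:ℝ) < n := by exact_mod_cast (by omega : 0 < n)
      have hdm : m * q n + (n - (N+1)) % m = n - (N+1) := Nat.div_add_mod _ m
      have hsm : (n - (N+1)) % m < m := Nat.mod_lt _ hm
      have hnat : n ≤ m * q n + (N + 1 + m) := by omega
      have hcast : (n:ℝ) ≤ (m:ℝ) * q n + ((N:ℝ) + 1 + m) := by exact_mod_cast hnat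
      have h1 : (n:ℝ) - ((N:ℝ) + 1 + m) ≤ (m:ℝ) * q n := by linarith
      have heq : 1/(m:ℝ) - D * (1/n) = ((n:ℝ) - ((N:ℝ) + 1 + m)) / ((m:ℝ) * n) := by
        rw [hD]
        field_simp
      rw [heq]
      calc ((n:ℝ) - ((N:ℝ) + 1 + m)) / ((m:ℝ) * n) ≤ ((m:ℝ) * q n) / ((m:ℝ) * n) := by
            gcongr
          _ = (q n : ℝ) / n := mul_div_mul_left _ _ (by positivity)
    · filter_upwards [eventually_ge_atTop 1] with n hn
      have hn0 : (0:ℝ) < n := by exact_mod_cast (by omega : 0 < n)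
      rw [div_le_div_iff₀ hn0 hm0]
      have h2 : q n * m ≤ n := le_trans (Nat.div_mul_le_self _ _) (by omega)
      calc (q n : ℝ) * m ≤ (n:ℝ) := by exact_mod_cast h2
        _ = 1 * (n:ℝ) := by ring
  have hBn : Tendsto (fun n : ℕ => B * (1/(n:ℝ))) atTop (nhds 0) := by
    simpa using tendsto_one_div_atTop_nhds_zero_nat.const_mul B
  have hmain := (hq_div.const_mul A).add hBn
  rw [add_zero] at hmain
  have hval : A * (1/(m:ℝ)) = A / m := by ring
  rw [hval] at hmain
  refine hmain.congr' ?_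
  filter_upwards [eventually_ge_atTop 1] with n hn
  have hn0 : (n:ℝ) ≠ 0 := by
    have : (0:ℝ) < n := by exact_mod_cast (by omega : 0 < n)
    positivity
  field_simp
  ring

lemma ereal_fekete (v : ℕ → EReal) (N : ℕ)
    (hsup : ∀ m n, 0 < m → 0 < n → v m + v n ≤ v (m + n))
    (hbot : ∀ n, N < n → v n ≠ ⊥) :
    Tendsto (fun n : ℕ => v n / ((n : ℝ) : EReal)) atTop
      (nhds (limsup (fun n : ℕ => v n / ((n : ℝ) : EReal)) atTop)) := by
  set g : ℕ → EReal := fun n => v n / ((n : ℝ) : EReal) with hg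
  have key : ∀ m, N < m → g m ≤ liminf g atTop := by
    intro m hNm
    have hm : 0 < m := by omega
    by_cases htop : v m = ⊤
    · have hev : ∀ n, N + m < n → v n = ⊤ := by
        intro n hn
        have h1 : 0 < n - m := by omega
        have h2 := hsup m (n - m) hm h1
        rw [htop, EReal.top_add_of_ne_bot (hbot _ (by omega))] at h2
        have h3 : m + (n - m) = n := by omega
        rw [h3] at h2
        exact top_le_iff.1 h2
      have hliminf : (⊤ : EReal) ≤ liminf g atTop := by
        refine le_liminf_of_le (by isBoundedDefault) ?_
        filter_upwards [eventually_gt_atTop (N + m)] with n hn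
        have hn0 : (0 : EReal) < ((n:ℝ) : EReal) := by
          have : (0:ℝ) < (n:ℝ) := by exact_mod_cast (by omega : 0 < n)
          exact_mod_cast this
        have : g n = ⊤ := by
          show v n / ((n:ℝ) : EReal) = ⊤
          rw [hev n hn]
          exact EReal.top_div_of_pos_ne_top hn0 (EReal.coe_ne_top _)
        rw [this]
      exact le_trans le_top hliminf
    · set A : ℝ := (v m).toReal with hAdef
      have hA : v m = (A : EReal) := (EReal.coe_toReal htop (hbot m hNm)).symm
      obtain ⟨B, hB⟩ : ∃ B : ℝ, ∀ r, N < r → r ≤ N + m → (B : EReal) ≤ v r := by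
        have hne : (Finset.Icc (N+1) (N+m)).Nonempty := ⟨N+1, by simp; omega⟩
        obtain ⟨r₀, hr₀mem, hr₀⟩ := Finset.exists_mem_eq_inf' hne v
        have hbne : (Finset.Icc (N+1) (N+m)).inf' hne v ≠ ⊥ := by
          rw [hr₀]
          simp only [Finset.mem_Icc] at hr₀mem
          exact hbot r₀ (by omega)
        obtain ⟨B, hB1, hB2⟩ := EReal.exists_between_coe_real (Ne.bot_lt hbne)
        refine ⟨B, fun r h1 h2 => le_trans hB2.le (Finset.inf'_le v ?_)⟩
        simp only [Finset.mem_Icc]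
        omega
      have growth : ∀ (j r : ℕ), N < r → r ≤ N + m →
          (((j : ℝ) * A + B : ℝ) : EReal) ≤ v (j * m + r) := by
        intro j
        induction j with
        | zero =>
          intro r h1 h2
          simpa using hB r h1 h2
        | succ j ih =>
          intro r h1 h2
          have h3 : (j+1) * m + r = m + (j * m + r) := by ring
          rw [h3]
          refine le_trans ?_ (hsup m (j*m+r) hm (by omega))
          have h4 : ((((j:ℝ)+1) * A + B : ℝ) : EReal)
              = (A : EReal) + (((j:ℝ) * A + B : ℝ) : EReal) := by
            rw [← EReal.coe_add]
            congr 1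
            ring
          have h5 : (((j+1 : ℕ) : ℝ) * A + B : ℝ) = (((j:ℝ)+1) * A + B : ℝ) := by
            push_cast
            ring
          rw [h5, h4, ← hA]
          exact add_le_add_right (ih r h1 h2) _
      have hlow : ∀ n, N < n →
          ((((((n - (N+1))/m : ℕ) : ℝ) * A + B) / (n:ℝ) : ℝ) : EReal) ≤ g n := by
        intro n hn
        set j := (n - (N+1)) / m with hj
        have hsm : (n - (N+1)) % m < m := Nat.mod_lt _ hm
        have hdm : m * j + (n - (N+1)) % m = n - (N+1) := Nat.div_add_mod _ m
        have hr1 : N < N + 1 + (n - (N+1)) % m := by omega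
        have hr2 : N + 1 + (n - (N+1)) % m ≤ N + m := by omega
        have hcm : j * m = m * j := Nat.mul_comm _ _
        have hn' : n = j * m + (N + 1 + (n - (N+1)) % m) := by omega
        have h1 : (((j : ℝ) * A + B : ℝ) : EReal) ≤ v n := by
          conv_rhs => rw [hn']
          exact growth j _ hr1 hr2
        have hnn : (0:ℝ) ≤ (n:ℝ) := by positivity
        calc ((((j:ℝ) * A + B) / (n:ℝ) : ℝ) : EReal)
            = (((j:ℝ) * A + B : ℝ) : EReal) / (((n:ℝ)) : EReal) := EReal.coe_div _ _
          _ ≤ v n / (((n:ℝ)) : EReal) :=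
              EReal.div_le_div_right_of_nonneg (by exact_mod_cast hnn) h1
      have hψ := ratio_tendsto N m hm A B
      have hcoe : Tendsto
          (fun n : ℕ => ((((((n - (N+1))/m : ℕ) : ℝ) * A + B) / (n:ℝ) : ℝ) : EReal)) atTop
          (nhds ((A/(m:ℝ) : ℝ) : EReal)) := EReal.tendsto_coe.2 hψ
      have h2 : ((A/(m:ℝ) : ℝ) : EReal) ≤ liminf g atTop := by
        rw [← hcoe.liminf_eq]
        refine liminf_le_liminf ?_
        filter_upwards [eventually_gt_atTop N] with n hn
        exact hlow n hn
      calc g m = v m / (((m:ℝ)) : EReal) := rfl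
        _ = ((A/(m:ℝ) : ℝ) : EReal) := by rw [hA, EReal.coe_div]
        _ ≤ liminf g atTop := h2
  have hls : limsup g atTop ≤ liminf g atTop := by
    have h1 : limsup g atTop ≤ ⨆ m ∈ Set.Ioi N, g m := by
      refine limsup_le_of_le (by isBoundedDefault) ?_
      filter_upwards [eventually_gt_atTop N] with n hn
      exact le_iSup₂ (f := fun m (_ : m ∈ Set.Ioi N) => g m) n hn
    refine h1.trans (iSup₂_le ?_)
    intro m hm
    exact key m hm
  exact tendsto_of_le_liminf_of_limsup_le hls le_rfl

end Fekete

section Helpers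

lemma ereal_neg_add_cancel (κ : ℝ) (u : EReal) :
    ((-κ : ℝ) : EReal) + ((κ : EReal) + u) = u := by
  induction u using EReal.rec with
  | bot => rw [EReal.add_bot, EReal.add_bot]
  | coe x =>
    rw [← EReal.coe_add, ← EReal.coe_add]
    norm_num
  | top => rw [EReal.coe_add_top, EReal.coe_add_top]

lemma ereal_div_decomp (κ : ℝ) (u : EReal) {r : ℝ} (hr : 0 < r) :
    u / ((r : ℝ) : EReal) = ((-κ / r : ℝ) : EReal) + ((κ : EReal) + u) / ((r : ℝ) : EReal) := by
  have hrp : (0 : EReal) < (r : EReal) := EReal.coe_pos.2 hr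
  induction u using EReal.rec with
  | bot =>
    rw [EReal.add_bot, EReal.bot_div_of_pos_ne_top hrp (EReal.coe_ne_top r), EReal.add_bot]
  | coe x =>
    rw [← EReal.coe_add, ← EReal.coe_div, ← EReal.coe_div, ← EReal.coe_add]
    congr 1
    field_simp
    ring
  | top =>
    rw [EReal.coe_add_top, EReal.top_div_of_pos_ne_top hrp (EReal.coe_ne_top r),
      EReal.coe_add_top]

lemma ereal_log_helper {c : ℝ≥0∞} (hc0 : 0 < c) (hcT : c ≠ ⊤) :
    ((ENNReal.log c).toReal : EReal) = ENNReal.log c := by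
  refine EReal.coe_toReal ?_ ?_
  · simpa using hcT
  · simpa using hc0.ne'

end Helpers

/-- The value of the almost-additive Gurevich pressure does not depend on the chosen
symbol `a`. -/
theorem pressure_independent_of_symbol {S : Type*} [Countable S] (T : S → S → Prop)
    (hmix : ∀ a b : S, ∃ N : ℕ, ∀ n > N, ∃ x ∈ shiftSpace T, x 0 = a ∧ x n = b)
    (f : ℕ → (ℕ → S) → ℝ) (M C : ℝ) (hM : 0 < M) (hC : 0 ≤ C)
    (hpos : ∀ n, 0 < n → ∀ x ∈ shiftSpace T, 0 < f n x)
    (hBowen : ∀ n, 0 < n → ∀ x ∈ shiftSpace T, ∀ y ∈ shiftSpace T,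
      (∀ i < n, x i = y i) → f n x ≤ M * f n y)
    (hAA : ∀ n m, 0 < n → 0 < m → ∀ x ∈ shiftSpace T,
      f n x * f m (shf^[n] x) * Real.exp (-C) ≤ f (n + m) x ∧
        f (n + m) x ≤ Real.exp C * (f n x * f m (shf^[n] x))) :
    ∃ P : EReal, ∀ a : S,
      Tendsto (fun n : ℕ => ENNReal.log (ZFun T f n a) / ((n : ℝ) : EReal)) atTop (nhds P) := by
  classical
  rcases isEmpty_or_nonempty S with hS | hS
  · exact ⟨0, fun a => (IsEmpty.false a).elim⟩
  set g : S → ℕ → EReal :=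
    fun a n => ENNReal.log (ZFun T f n a) / ((n : ℝ) : EReal) with hgdef
  -- Step 1: for each a, the limit exists
  have hlim : ∀ a : S, ∃ L : EReal, Tendsto (g a) atTop (nhds L) := by
    intro a
    set K : ℝ := Real.exp (-C) / (M * M) with hK
    have hK0 : 0 < K := by positivity
    set K₁ : ℝ := min K 1 with hK₁
    have hK₁0 : 0 < K₁ := lt_min hK0 one_pos
    set c₁ : ℝ≥0∞ := ENNReal.ofReal K₁ with hc₁
    have hc₁0 : 0 < c₁ := ENNReal.ofReal_pos.2 hK₁0
    set κ : ℝ := Real.log K₁ with hκ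
    have hlogc₁ : ENNReal.log c₁ = (κ : EReal) := ENNReal.log_ofReal_of_pos hK₁0
    obtain ⟨N, hN⟩ := hmix a a
    have hZ : ∀ n, N < n → 0 < ZFun T f n a := Zpos hpos hN
    set v : ℕ → EReal := fun n => ENNReal.log (c₁ * ZFun T f n a) with hv
    have hsupZ : ∀ m n, 0 < m → 0 < n → v m + v n ≤ v (m + n) := by
      intro m n hm hn
      show ENNReal.log (c₁ * ZFun T f m a) + ENNReal.log (c₁ * ZFun T f n a)
        ≤ ENNReal.log (c₁ * ZFun T f (m + n) a)
      rw [← ENNReal.log_mul_add]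
      refine ENNReal.log_monotone ?_
      have h1 : c₁ * ZFun T f m a * (c₁ * ZFun T f n a)
          = c₁ * (c₁ * (ZFun T f m a * ZFun T f n a)) := by ring
      rw [h1]
      refine mul_le_mul_right ?_ c₁
      have h2 : c₁ * (ZFun T f m a * ZFun T f n a)
          ≤ ENNReal.ofReal K * (ZFun T f m a * ZFun T f n a) :=
        mul_le_mul_left (ENNReal.ofReal_le_ofReal (min_le_left _ _)) _
      exact h2.trans (Zsuper hM hpos hBowen hAA a m n hm hn)
    have hbotZ : ∀ n, N < n → v n ≠ ⊥ := by
      intro n hn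
      show ENNReal.log (c₁ * ZFun T f n a) ≠ ⊥
      simp only [ne_eq, ENNReal.log_eq_bot_iff]
      exact (ENNReal.mul_pos hc₁0.ne' (hZ n hn).ne').ne'
    have hT := ereal_fekete v N hsupZ hbotZ
    set L' := limsup (fun n : ℕ => v n / ((n : ℝ) : EReal)) atTop with hL'
    refine ⟨L', ?_⟩
    -- transfer from v to log Z
    have hva : ∀ n, v n = (κ : EReal) + ENNReal.log (ZFun T f n a) := by
      intro n
      show ENNReal.log (c₁ * ZFun T f n a) = _
      rw [ENNReal.log_mul_add, hlogc₁]
    have h0 : Tendsto (fun n : ℕ => ((-κ / (n : ℝ) : ℝ) : EReal)) atTop (nhds 0) := by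
      rw [← EReal.coe_zero]
      refine EReal.tendsto_coe.2 ?_
      exact tendsto_const_div_atTop_nhds_zero_nat (-κ)
    have hadd : Tendsto
        (fun n : ℕ => ((-κ / (n : ℝ) : ℝ) : EReal) + v n / ((n : ℝ) : EReal)) atTop
        (nhds (0 + L')) := by
      have hcont : ContinuousAt (fun p : EReal × EReal => p.1 + p.2) ((0 : EReal), L') :=
        EReal.continuousAt_add (by simp) (by simp)
      exact (hcont.tendsto).comp (h0.prodMk_nhds hT)
    rw [zero_add] at hadd
    refine hadd.congr' ?_
    filter_upwards [eventually_gt_atTop 0] with n hn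
    have hrn : (0:ℝ) < (n:ℝ) := by exact_mod_cast hn
    show ((-κ / (n : ℝ) : ℝ) : EReal) + v n / ((n : ℝ) : EReal) = g a n
    rw [hva n]
    exact (ereal_div_decomp κ (ENNReal.log (ZFun T f n a)) hrn).symm
  choose L hL using hlim
  -- Step 2: comparison between symbols
  have hcross : ∀ a b : S, L a ≤ L b := by
    intro a b
    obtain ⟨k, c, hk0, hc0, hcT, hcomp⟩ := Zcomp hM hpos hBowen hAA hmix a b
    by_contra hcon
    push_neg at hcon
    obtain ⟨c', hc1', hc2'⟩ := EReal.exists_between_coe_real hcon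
    set κc : ℝ := (ENNReal.log c).toReal with hκc
    have hκceq : (κc : EReal) = ENNReal.log c := ereal_log_helper hc0 hcT
    -- eventually g b m < c'
    have hev1 : ∀ᶠ m in atTop, g b m < (c' : EReal) := (hL b).eventually_lt_const hc1'
    have hev2 : ∀ᶠ n in atTop, g b (n + 2 * k) < (c' : EReal) :=
      (tendsto_add_atTop_nat (2 * k)).eventually hev1
    -- the real comparison sequence
    set ψ : ℕ → ℝ := fun n => (-κc + ((n : ℝ) + 2 * k) * c') / n with hψdef
    have hψ : Tendsto ψ atTop (nhds c') := by
      have h1 : Tendsto (fun n : ℕ => (-κc + 2 * (k:ℝ) * c') * (1 / (n:ℝ))) atTop (nhds 0) := by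
        simpa using tendsto_one_div_atTop_nhds_zero_nat.const_mul (-κc + 2 * (k:ℝ) * c')
      have h2 := h1.add (tendsto_const_nhds (x := c') (f := atTop (α := ℕ)))
      rw [zero_add] at h2
      refine h2.congr' ?_
      filter_upwards [eventually_gt_atTop 0] with n hn
      have hrn : (n:ℝ) ≠ 0 := by
        have : (0:ℝ) < (n:ℝ) := by exact_mod_cast hn
        positivity
      show (-κc + 2 * (k:ℝ) * c') * (1 / (n:ℝ)) + c' = ψ n
      rw [hψdef]
      field_simp
      ring
    have hle : ∀ᶠ n in atTop, g a n ≤ ((ψ n : ℝ) : EReal) := by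
      filter_upwards [eventually_gt_atTop 0, hev2] with n hn hgb
      have hn2k : (0:ℝ) < ((n + 2 * k : ℕ) : ℝ) := by exact_mod_cast (by omega : 0 < n + 2 * k)
      have hrn : (0:ℝ) < (n:ℝ) := by exact_mod_cast hn
      -- step 1 : log Z_n(a) ≤ -κc + log Z_{n+2k}(b)
      have hstep1 : ENNReal.log (ZFun T f n a)
          ≤ ((-κc : ℝ) : EReal) + ENNReal.log (ZFun T f (n + 2 * k) b) := by
        have h1 : ENNReal.log (c * ZFun T f n a) ≤ ENNReal.log (ZFun T f (n + 2 * k) b) :=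
          ENNReal.log_monotone (hcomp n hn)
        rw [ENNReal.log_mul_add, ← hκceq] at h1
        calc ENNReal.log (ZFun T f n a)
            = ((-κc : ℝ) : EReal) + ((κc : EReal) + ENNReal.log (ZFun T f n a)) :=
              (ereal_neg_add_cancel κc _).symm
          _ ≤ ((-κc : ℝ) : EReal) + ENNReal.log (ZFun T f (n + 2 * k) b) :=
              add_le_add_right h1 _
      -- step 2 : log Z_{n+2k}(b) ≤ (n+2k) * c'
      have hstep2 : ENNReal.log (ZFun T f (n + 2 * k) b)
          ≤ ((((n + 2 * k : ℕ) : ℝ) * c' : ℝ) : EReal) := by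
        have h2 : ENNReal.log (ZFun T f (n + 2 * k) b) / (((n + 2 * k : ℕ) : ℝ) : EReal)
            ≤ (c' : EReal) := le_of_lt hgb
        rw [EReal.div_le_iff_le_mul (by exact_mod_cast hn2k) (EReal.coe_ne_top _)] at h2
        rw [EReal.coe_mul]
        exact h2
      have hnum : ENNReal.log (ZFun T f n a) ≤ ((-κc + ((n:ℝ) + 2 * k) * c' : ℝ) : EReal) := by
        refine hstep1.trans ?_
        have : ((-κc + ((n:ℝ) + 2 * k) * c' : ℝ) : EReal)
            = ((-κc : ℝ) : EReal) + ((((n + 2 * k : ℕ) : ℝ) * c' : ℝ) : EReal) := by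
          rw [← EReal.coe_add]
          congr 1
          push_cast
          ring
        rw [this]
        exact add_le_add_right hstep2 _
      calc g a n = ENNReal.log (ZFun T f n a) / (((n:ℝ)) : EReal) := rfl
        _ ≤ ((-κc + ((n:ℝ) + 2 * k) * c' : ℝ) : EReal) / (((n:ℝ)) : EReal) :=
            EReal.div_le_div_right_of_nonneg (by exact_mod_cast hrn.le) hnum
        _ = ((ψ n : ℝ) : EReal) := by rw [← EReal.coe_div]
    have : L a ≤ (c' : EReal) :=
      le_of_tendsto_of_tendsto (hL a) (EReal.tendsto_coe.2 hψ) hle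
    exact absurd (lt_of_lt_of_le hc2' this) (lt_irrefl _)
  obtain ⟨a₀⟩ := hS
  refine ⟨L a₀, fun a => ?_⟩
  have : L a = L a₀ := le_antisymm (hcross a a₀) (hcross a₀ a)
  rw [← this]
  exact hL a
end
end

section
/- Let {A_k} be a countable family of d×d matrices with strictly positive entries such that there is C > 0 with min_{i,j}(A_k)_{ij} / max_{i,j}(A_k)_{ij} ≥ dC for all k. Define ‖A‖ = Uᵗ A U (sum of all entries, U the all-ones vector) and φ_n(w) = ‖A_{i_{n−1}} ⋯ A_{i₁} A_{i₀}‖ for w = (i₀, i₁, …) in a countable Markov shift Σ. Then {log φ_n} is almost-additive: there is C' ≥ 0 with φ_n(w) φ_m(σⁿw) e^{−C'} ≤ φ_{n+m}(w) ≤ φ_n(w) φ_m(σⁿw) e^{C'} for all n, m, w. -/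
open scoped ENNReal
open Filter MeasureTheory

noncomputable section

/-- The entrywise-sum norm `‖A‖ = Uᵗ A U`. -/
def matNorm {d : ℕ} (M : Matrix (Fin d) (Fin d) ℝ) : ℝ := ∑ i, ∑ j, M i j

/-- The ordered product `A_{w_{n-1}} ⋯ A_{w_1} A_{w_0}`. -/
def matProd {d : ℕ} (A : ℕ → Matrix (Fin d) (Fin d) ℝ) (n : ℕ) (w : ℕ → ℕ) :
    Matrix (Fin d) (Fin d) ℝ :=
  (((List.range n).reverse).map fun i => A (w i)).prod

/-- `φ_n(w) = ‖A_{w_{n-1}} ⋯ A_{w_0}‖`. -/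
def phiM {d : ℕ} (A : ℕ → Matrix (Fin d) (Fin d) ℝ) (n : ℕ) (w : ℕ → ℕ) : ℝ :=
  matNorm (matProd A n w)

lemma shf_iterate {S : Type*} (n : ℕ) (w : ℕ → S) (i : ℕ) :
    (shf^[n] w) i = w (i + n) := by
  induction n generalizing w with
  | zero => simp
  | succ p ih =>
    rw [Function.iterate_succ_apply, ih]
    simp [shf, Nat.add_assoc]

lemma matProd_succ {d : ℕ} (A : ℕ → Matrix (Fin d) (Fin d) ℝ) (n : ℕ) (w : ℕ → ℕ) :
    matProd A (n + 1) w = A (w n) * matProd A n w := by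
  simp [matProd, List.range_succ]

lemma matProd_add {d : ℕ} (A : ℕ → Matrix (Fin d) (Fin d) ℝ) (n m : ℕ) (w : ℕ → ℕ) :
    matProd A (n + m) w = matProd A m (shf^[n] w) * matProd A n w := by
  induction m with
  | zero => simp [matProd]
  | succ p ih =>
    rw [← Nat.add_assoc, matProd_succ, ih, matProd_succ, shf_iterate, Nat.add_comm p n,
      Matrix.mul_assoc]

lemma matProd_nonneg {d : ℕ} (A : ℕ → Matrix (Fin d) (Fin d) ℝ)
    (hpos : ∀ k i j, 0 < A k i j) (n : ℕ) (w : ℕ → ℕ) (i j : Fin d) :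
    0 ≤ matProd A n w i j := by
  induction n generalizing i j with
  | zero => simp [matProd, Matrix.one_apply]; positivity
  | succ p ih =>
    rw [matProd_succ, Matrix.mul_apply]
    exact Finset.sum_nonneg fun k _ => mul_nonneg (hpos _ _ _).le (ih k j)

lemma matNorm_nonneg {d : ℕ} (A : ℕ → Matrix (Fin d) (Fin d) ℝ)
    (hpos : ∀ k i j, 0 < A k i j) (n : ℕ) (w : ℕ → ℕ) :
    0 ≤ matNorm (matProd A n w) :=
  Finset.sum_nonneg fun i _ => Finset.sum_nonneg fun j _ => matProd_nonneg A hpos n w i j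

/-- Row sums of a nontrivial product are comparable. -/
lemma matProd_row_comp {d : ℕ} (A : ℕ → Matrix (Fin d) (Fin d) ℝ)
    (hpos : ∀ k i j, 0 < A k i j) (C : ℝ)
    (hcone : ∀ k (i j i' j' : Fin d), (d : ℝ) * C * A k i' j' ≤ A k i j)
    (n : ℕ) (hn : 0 < n) (w : ℕ → ℕ) (k k' : Fin d) :
    (d : ℝ) * C * ∑ j, matProd A n w k' j ≤ ∑ j, matProd A n w k j := by
  obtain ⟨p, rfl⟩ := Nat.exists_eq_add_of_lt hn
  simp only [Nat.zero_add, matProd_succ, Matrix.mul_apply]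
  rw [Finset.sum_comm, Finset.sum_comm (γ := Fin d), Finset.mul_sum]
  refine Finset.sum_le_sum fun t _ => ?_
  rw [Finset.mul_sum]
  refine Finset.sum_le_sum fun x _ => ?_
  rw [← mul_assoc]
  exact mul_le_mul_of_nonneg_right (hcone _ _ _ _ _) (matProd_nonneg A hpos p w x t)

lemma matNorm_mul {d : ℕ} (B P : Matrix (Fin d) (Fin d) ℝ) :
    matNorm (B * P) = ∑ i, ∑ t, B i t * ∑ j, P t j := by
  simp only [matNorm, Matrix.mul_apply]
  refine Finset.sum_congr rfl fun i _ => ?_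
  rw [Finset.sum_comm]
  simp [Finset.mul_sum]

lemma matNorm_mul_le {d : ℕ} (B P : Matrix (Fin d) (Fin d) ℝ)
    (hB : ∀ i j, 0 ≤ B i j) (hP : ∀ i j, 0 ≤ P i j) :
    matNorm (B * P) ≤ matNorm B * matNorm P := by
  rw [matNorm_mul]
  have : matNorm B * matNorm P = ∑ i, ∑ t, B i t * matNorm P := by
    simp [matNorm, Finset.sum_mul]
  rw [this]
  refine Finset.sum_le_sum fun i _ => Finset.sum_le_sum fun t _ => ?_
  refine mul_le_mul_of_nonneg_left ?_ (hB i t)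
  exact Finset.single_le_sum (f := fun t' => ∑ j, P t' j)
    (fun t' _ => Finset.sum_nonneg fun j _ => hP t' j) (Finset.mem_univ t)

lemma matNorm_mul_ge {d : ℕ} (hd : 0 < d) (C : ℝ) (B P : Matrix (Fin d) (Fin d) ℝ)
    (hB : ∀ i j, 0 ≤ B i j)
    (hrow : ∀ k k' : Fin d, (d : ℝ) * C * ∑ j, P k' j ≤ ∑ j, P k j) :
    C * (matNorm B * matNorm P) ≤ matNorm (B * P) := by
  have hr : ∀ t : Fin d, C * matNorm P ≤ ∑ j, P t j := by
    intro t
    have h1 : (d : ℝ) * (C * matNorm P) ≤ (d : ℝ) * ∑ j, P t j := by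
      have := Finset.sum_le_sum (fun k' (_ : k' ∈ Finset.univ) => hrow t k')
      simp only [Finset.sum_const, Finset.card_univ, Fintype.card_fin, nsmul_eq_mul] at this
      calc (d : ℝ) * (C * matNorm P) = ∑ k' : Fin d, (d : ℝ) * C * ∑ j, P k' j := by
            simp [matNorm, Finset.mul_sum]; ring_nf
        _ ≤ (d : ℝ) * ∑ j, P t j := this
    exact le_of_mul_le_mul_left h1 (by exact_mod_cast hd)
  rw [matNorm_mul]
  have : ∑ i, ∑ t, B i t * (C * matNorm P) = C * (matNorm B * matNorm P) := by
    simp only [← Finset.sum_mul]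
    simp only [matNorm]; ring
  rw [← this]
  exact Finset.sum_le_sum fun i _ => Finset.sum_le_sum fun t _ =>
    mul_le_mul_of_nonneg_left (hr t) (hB i t)

/-- For positive matrices satisfying the uniform cone condition
`min entries / max entries ≥ dC`, the sequence `{log φ_n}` is almost-additive. -/
theorem matrix_norms_almost_additive {d : ℕ} (hd : 0 < d)
    (A : ℕ → Matrix (Fin d) (Fin d) ℝ) (hpos : ∀ k i j, 0 < A k i j)
    (C : ℝ) (hC : 0 < C)
    (hcone : ∀ k (i j i' j' : Fin d), (d : ℝ) * C * A k i' j' ≤ A k i j)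
    (T : ℕ → ℕ → Prop) :
    ∃ C' : ℝ, 0 ≤ C' ∧ ∀ n m : ℕ, 0 < n → 0 < m → ∀ w ∈ shiftSpace T,
      phiM A n w * phiM A m (shf^[n] w) * Real.exp (-C') ≤ phiM A (n + m) w ∧
        phiM A (n + m) w ≤ phiM A n w * phiM A m (shf^[n] w) * Real.exp C' := by
  -- First, `C ≤ 1`.
  have hd1 : (1 : ℝ) ≤ (d : ℝ) := by exact_mod_cast hd
  have hC1 : C ≤ 1 := by
    have i0 : Fin d := ⟨0, hd⟩
    have h := hcone 0 i0 i0 i0 i0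
    have ha := hpos 0 i0 i0
    have hCd : C ≤ (d : ℝ) * C := by nlinarith
    have hCa : C * A 0 i0 i0 ≤ 1 * A 0 i0 i0 := by nlinarith
    exact le_of_mul_le_mul_right hCa ha
  refine ⟨-Real.log C, ?_, ?_⟩
  · simpa using Real.log_nonpos hC.le hC1
  intro n m hn hm w _
  have hexp : Real.exp (-(-Real.log C)) = C := by
    rw [neg_neg, Real.exp_log hC]
  set B := matProd A m (shf^[n] w) with hB
  set P := matProd A n w with hP
  have hsplit : phiM A (n + m) w = matNorm (B * P) := by
    rw [phiM, matProd_add]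
  have hBn : ∀ i j, 0 ≤ B i j := matProd_nonneg A hpos m _
  have hPn : ∀ i j, 0 ≤ P i j := matProd_nonneg A hpos n _
  constructor
  · rw [hsplit, hexp]
    have := matNorm_mul_ge hd C B P hBn
      (matProd_row_comp A hpos C hcone n hn w)
    calc phiM A n w * phiM A m (shf^[n] w) * C
        = C * (matNorm B * matNorm P) := by rw [phiM, phiM]; ring
      _ ≤ matNorm (B * P) := this
  · rw [hsplit]
    have h1 : matNorm (B * P) ≤ matNorm B * matNorm P := matNorm_mul_le B P hBn hPn
    have h2 : matNorm B * matNorm P ≤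
        phiM A n w * phiM A m (shf^[n] w) * Real.exp (-Real.log C) := by
      have he : (1 : ℝ) ≤ Real.exp (-Real.log C) :=
        Real.one_le_exp (by simpa using Real.log_nonpos hC.le hC1)
      have hBnn : 0 ≤ matNorm B := matNorm_nonneg A hpos m _
      have hPnn : 0 ≤ matNorm P := matNorm_nonneg A hpos n _
      calc matNorm B * matNorm P
          = phiM A n w * phiM A m (shf^[n] w) * 1 := by rw [phiM, phiM]; ring
        _ ≤ phiM A n w * phiM A m (shf^[n] w) * Real.exp (-Real.log C) := by
            apply mul_le_mul_of_nonneg_left he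
            exact mul_nonneg hPnn hBnn
    exact h1.trans h2
end
end
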